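/- arXiv:1812.09446 — 4 statements merged into one kernel-verified Lean document; each statement's English description precedes it below -/
import Mathlib

section
/- The map q ↦ α(q) is strictly increasing and maps (1, M+1] bijectively onto the set of sequences (a_i) ∈ Ω_M that do not end in 0^∞ and satisfy σ^n((a_i)) ≼ (a_i) for all n ≥ 0. -/
open Filter Set

/-- Strict lexicographic order on digit sequences (0-indexed). -/
def seqLt (x y : ℕ → ℕ) : Prop := ∃ n, (∀ i < n, x i = y i) ∧ x n < y n

/-- Weak lexicographic order on digit sequences. -/
def seqLe (x y : ℕ → ℕ) : Prop := seqLt x y ∨ x = y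

/-- The sequence w0^∞ associated with a finite word. -/
def wordSeq (w : List ℕ) : ℕ → ℕ := fun i => w.getD i 0

/-- Words are compared via w ↦ w0^∞. -/
def wordLt (u v : List ℕ) : Prop := seqLt (wordSeq u) (wordSeq v)

def wordLe (u v : List ℕ) : Prop := seqLe (wordSeq u) (wordSeq v)

/-- Reflection of a sequence: each digit c is replaced by M - c. -/
def reflSeq (M : ℕ) (x : ℕ → ℕ) : ℕ → ℕ := fun i => M - x i

/-- Reflection of a word. -/
def reflW (M : ℕ) (w : List ℕ) : List ℕ := w.map (fun c => M - c)

/-- w⁺ : add one to the last digit. -/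
def wplus (w : List ℕ) : List ℕ := w.dropLast ++ [w.getLast! + 1]

/-- w⁻ : subtract one from the last digit. -/
def wminus (w : List ℕ) : List ℕ := w.dropLast ++ [w.getLast! - 1]

/-- n-fold left shift σⁿ. -/
def shiftn (x : ℕ → ℕ) (n : ℕ) : ℕ → ℕ := fun i => x (n + i)

/-- The prefix of length n of a sequence, as a word. -/
def pref (x : ℕ → ℕ) (n : ℕ) : List ℕ := (List.range n).map x

/-- The periodic sequence w^∞. -/
def periodic (w : List ℕ) : ℕ → ℕ := fun i => w.getD (i % w.length) 0

/-- The eventually periodic sequence u v^∞. -/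
def wordThenPer (u v : List ℕ) : ℕ → ℕ :=
  fun i => if i < u.length then u.getD i 0 else v.getD ((i - u.length) % v.length) 0

/-- A fundamental word over the alphabet {0,…,M}. -/
def IsFundamental (M : ℕ) (a : List ℕ) : Prop :=
  (∀ d ∈ a, d ≤ M) ∧
  ((a.length = 1 ∧ 2 ≤ M ∧ M - a.head! ≤ a.head! ∧ a.head! < M) ∨
   (2 ≤ a.length ∧ ∀ i, 1 ≤ i → i < a.length →
     wordLe (reflW M (a.take (a.length - i))) (a.drop i) ∧
     wordLt (a.drop i) (a.take (a.length - i))))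

/-- The block emitted by the two-state automaton computing Φ_a⁻¹, as a function of the previous
bit (`0` at the start, so that the automaton is in state A after a `1` and in state B after
a `0`) and the current bit: (1,1) ↦ overline(a), (1,0) ↦ overline(a⁺), (0,1) ↦ a⁺, (0,0) ↦ a. -/
def block (M : ℕ) (a : List ℕ) (prev cur : ℕ) : List ℕ :=
  if prev = 1 then (if cur = 1 then reflW M a else reflW M (wplus a))
  else (if cur = 1 then wplus a else a)

/-- Φ_a⁻¹ applied to a finite {0,1}-word b (whose first digit should be 1):
the concatenation of the blocks emitted by the automaton. -/
def phiInv (M : ℕ) (a : List ℕ) (b : List ℕ) : List ℕ :=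
  (List.range b.length).flatMap
    (fun i => block M a (if i = 0 then 0 else b.getD (i - 1) 0) (b.getD i 0))

/-- Φ_a⁻¹ applied to an infinite {0,1}-sequence b (whose first digit should be 1). -/
def phiInvSeq (M : ℕ) (a : List ℕ) (b : ℕ → ℕ) : ℕ → ℕ :=
  fun j =>
    (block M a (if j / a.length = 0 then 0 else b (j / a.length - 1)) (b (j / a.length))).getD
      (j % a.length) 0

/-- The set V = {x ∈ Ω_M : overline(x) ≼ σⁿ(x) ≼ x for all n ≥ 0}. -/
def Vset (M : ℕ) : Set (ℕ → ℕ) :=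
  {x | (∀ i, x i ≤ M) ∧ ∀ n, seqLe (reflSeq M x) (shiftn x n) ∧ seqLe (shiftn x n) x}

/-- An irreducible sequence (a_i) ∈ V: whenever a_j > 0 and (a_1…a_j⁻)^∞ ∈ V, one has
a_1…a_j(overline(a_1…a_j)⁺)^∞ ≺ (a_i). -/
def IrreducibleSeq (M : ℕ) (x : ℕ → ℕ) : Prop :=
  x ∈ Vset M ∧
  ∀ j, 1 ≤ j → 0 < x (j - 1) → periodic (wminus (pref x j)) ∈ Vset M →
    seqLt (wordThenPer (pref x j) (wplus (reflW M (pref x j)))) x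

/-- An irreducible fundamental word: one that is not a composition c∘d with c ∈ A_M, d ∈ A_1. -/
def IrreducibleWord (M : ℕ) (a : List ℕ) : Prop :=
  IsFundamental M a ∧
  ¬∃ c d : List ℕ, IsFundamental M c ∧ IsFundamental 1 d ∧ a = phiInv M c d

/-- a is the quasi-greedy q-expansion of 1 over alphabet {0,…,M}: the lexicographically largest
sequence with digits ≤ M, not ending in 0^∞, with Σ a_i q^{-i} = 1. -/
def isQuasiGreedy (M : ℕ) (q : ℝ) (a : ℕ → ℕ) : Prop :=
  (∀ i, a i ≤ M) ∧ (∀ N, ∃ i, N ≤ i ∧ a i ≠ 0) ∧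
  (∑' i : ℕ, (a i : ℝ) / q ^ (i + 1)) = 1 ∧
  ∀ b : ℕ → ℕ, (∀ i, b i ≤ M) → (∀ N, ∃ i, N ≤ i ∧ b i ≠ 0) →
    (∑' i : ℕ, (b i : ℝ) / q ^ (i + 1)) = 1 → seqLe b a

open Classical in
/-- The quasi-greedy expansion α(q) (well defined for q ∈ (1, M+1]). -/
noncomputable def alphaF (M : ℕ) (q : ℝ) : ℕ → ℕ :=
  if h : ∃ a, isQuasiGreedy M q a then h.choose else fun _ => 0

/-- The shifted Thue–Morse sequence: τ_i = (sum of binary digits of i) mod 2, τ_0 = 0. -/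
def tau (i : ℕ) : ℕ := (Nat.digits 2 i).sum % 2

/-- λ_i = k + τ_i - τ_{i-1} if M = 2k, and k + τ_i if M = 2k+1. -/
def lam (M i : ℕ) : ℕ := if M % 2 = 0 then M / 2 + tau i - tau (i - 1) else M / 2 + tau i

/-- The sequence (λ_i)_{i≥1} = α(q_KL), 0-indexed. -/
def lamSeq (M : ℕ) : ℕ → ℕ := fun n => lam M (n + 1)

/-- The sequence (τ_i)_{i≥1}, 0-indexed. -/
def tauSeq : ℕ → ℕ := fun n => tau (n + 1)

/-- The unit lift u_M: the word k if M = 2k, and (k+1)k if M = 2k+1. -/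
def unitLift (M : ℕ) : List ℕ := if M % 2 = 0 then [M / 2] else [M / 2 + 1, M / 2]

/-- α(q_n') = λ_1…λ_{2^{n-1}}(overline(λ_1…λ_{2^{n-1}})⁺)^∞ for M even, and
λ_1…λ_{2^n}(overline(λ_1…λ_{2^n})⁺)^∞ for M odd (n ≥ 1). -/
def alphaQn (M n : ℕ) : ℕ → ℕ :=
  wordThenPer (pref (lamSeq M) (if M % 2 = 0 then 2 ^ (n - 1) else 2 ^ n))
    (wplus (reflW M (pref (lamSeq M) (if M % 2 = 0 then 2 ^ (n - 1) else 2 ^ n))))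

/-- Ũ_q = {x ∈ Ω_M : overline(α(q)) ≺ σⁿ(x) ≺ α(q) for all n ≥ 0}. -/
def Utilde (M : ℕ) (q : ℝ) : Set (ℕ → ℕ) :=
  {x | (∀ i, x i ≤ M) ∧
    ∀ n, seqLt (reflSeq M (alphaF M q)) (shiftn x n) ∧ seqLt (shiftn x n) (alphaF M q)}

/-- V_q = {x ∈ Ω_M : overline(α(q)) ≼ σⁿ(x) ≼ α(q) for all n ≥ 0}. -/
def VqSet (M : ℕ) (q : ℝ) : Set (ℕ → ℕ) :=
  {x | (∀ i, x i ≤ M) ∧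
    ∀ n, seqLe (reflSeq M (alphaF M q)) (shiftn x n) ∧ seqLe (shiftn x n) (alphaF M q)}

/-- B_n(X): the set of length-n prefixes of sequences in X. -/
def prefixSet (X : Set (ℕ → ℕ)) (n : ℕ) : Set (List ℕ) := (fun x => pref x n) '' X

/-- Topological entropy h(X) = lim (log #B_n(X))/n (the limit exists for shift-invariant X,
in which case it coincides with the limsup used here). -/
noncomputable def entropyOf (X : Set (ℕ → ℕ)) : ℝ :=
  Filter.atTop.limsup fun n : ℕ => Real.log (Nat.card ↥(prefixSet X n)) / n

/-- The entropy function H(q) = h(Ũ_q). -/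
noncomputable def Hent (M : ℕ) (q : ℝ) : ℝ := entropyOf (Utilde M q)

/-- c_M = 1 for even M, 1/2 for odd M. -/
noncomputable def cM (M : ℕ) : ℝ := if M % 2 = 0 then 1 else 1 / 2

/-- The fundamental interval J_a = [q_L(a), q_R(a)], described via the characterizations
α(q_L(a)) = a^∞ and α(q_R(a)) = a⁺(overline(a))^∞. -/
def Jset (M : ℕ) (a : List ℕ) : Set ℝ :=
  {q | ∃ qL qR : ℝ, qL ∈ Set.Ioc (1:ℝ) ((M:ℝ)+1) ∧ qR ∈ Set.Ioc (1:ℝ) ((M:ℝ)+1) ∧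
    alphaF M qL = periodic a ∧ alphaF M qR = wordThenPer (wplus a) (reflW M a) ∧
    q ∈ Set.Icc qL qR}

/-- The word w occurs (as a factor) in some sequence of X. -/
def occursIn (w : List ℕ) (X : Set (ℕ → ℕ)) : Prop :=
  ∃ x ∈ X, ∃ k, ∀ i < w.length, x (k + i) = w.getD i 0

/-- [pL, pR] is an entropy plateau: a maximal interval in (1, M+1] on which H is positive
and constant. -/
def IsPlateau (M : ℕ) (pL pR : ℝ) : Prop :=
  pL ≤ pR ∧ Set.Icc pL pR ⊆ Set.Ioc 1 ((M:ℝ)+1) ∧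
  (∀ q ∈ Set.Icc pL pR, 0 < Hent M q ∧ Hent M q = Hent M pL) ∧
  ∀ S : Set ℝ, S.OrdConnected → S ⊆ Set.Ioc 1 ((M:ℝ)+1) →
    (∀ q ∈ S, 0 < Hent M q) → (∀ q ∈ S, ∀ q' ∈ S, Hent M q = Hent M q') →
    Set.Icc pL pR ⊆ S → S = Set.Icc pL pR

/-- An n-irreducible word (n ≥ 1): a = u_M ∘ (10)^{∘(n-1)} ∘ b with b ∈ A_1 irreducible. -/
def nIrreducibleWord (M n : ℕ) (a : List ℕ) : Prop :=
  ∃ b : List ℕ, IrreducibleWord 1 b ∧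
    a = phiInv M ((fun w => phiInv M w [1, 0])^[n - 1] (unitLift M)) b

namespace QG

lemma seqLt_irrefl (x : ℕ → ℕ) : ¬ seqLt x x := by
  rintro ⟨n, _, h⟩; exact lt_irrefl _ h

lemma seqLt_asymm {x y : ℕ → ℕ} (h : seqLt x y) (h' : seqLt y x) : False := by
  obtain ⟨n, hpre, hn⟩ := h
  obtain ⟨m, hpre', hm⟩ := h'
  rcases lt_trichotomy n m with h | rfl | h
  · exact absurd (hpre' n h) (by omega)
  · omega
  · exact absurd (hpre m h) (by omega)

lemma seqLe_antisymm {x y : ℕ → ℕ} (h : seqLe x y) (h' : seqLe y x) : x = y := by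
  rcases h with h | rfl
  · rcases h' with h' | rfl
    · exact absurd h' (fun h'' => seqLt_asymm h h'')
    · rfl
  · rfl

lemma seqLe_or_lt (x y : ℕ → ℕ) : seqLe x y ∨ seqLt y x := by
  classical
  by_cases hxy : x = y
  · exact Or.inl (Or.inr hxy)
  · obtain ⟨n, hn⟩ : ∃ n, x n ≠ y n := Function.ne_iff.mp hxy
    have hex : ∃ n, x n ≠ y n := ⟨n, hn⟩
    have hpre : ∀ i < Nat.find hex, x i = y i := fun i hi => not_not.mp (Nat.find_min hex hi)
    rcases lt_or_gt_of_ne (Nat.find_spec hex) with h | h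
    · exact Or.inl (Or.inl ⟨_, hpre, h⟩)
    · exact Or.inr ⟨_, fun i hi => (hpre i hi).symm, h⟩

lemma shiftn_shiftn (b : ℕ → ℕ) (n m : ℕ) : shiftn (shiftn b n) m = shiftn b (n + m) := by
  funext i; simp [shiftn, Nat.add_assoc]

lemma shiftn_zero (b : ℕ → ℕ) : shiftn b 0 = b := by
  funext i; simp [shiftn]

noncomputable def dig (M : ℕ) (q x : ℝ) : ℕ := min M (⌈q * x⌉ - 1).toNat

noncomputable def rem (M : ℕ) (q x : ℝ) : ℕ → ℝ
  | 0 => x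
  | n+1 => q * rem M q x n - dig M q (rem M q x n)

noncomputable def seq (M : ℕ) (q x : ℝ) (n : ℕ) : ℕ := dig M q (rem M q x n)

variable {M : ℕ} {q x y : ℝ}

lemma dig_le (M : ℕ) (q x : ℝ) : dig M q x ≤ M := min_le_left _ _

lemma dig_prop (hq : 1 < q) (hqM : q ≤ M + 1) (hx0 : 0 < x) (hx1 : x ≤ 1) :
    ((dig M q x : ℝ) < q * x) ∧ (q * x ≤ dig M q x + 1) := by
  have ht0 : 0 < q * x := mul_pos (lt_trans one_pos hq) hx0
  have htM : q * x ≤ M + 1 := by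
    calc q * x ≤ q * 1 := by nlinarith
    _ ≤ M + 1 := by linarith
  have hc1 : 1 ≤ ⌈q * x⌉ := by
    exact_mod_cast Int.ceil_pos.mpr ht0
  have hcle : (⌈q * x⌉ : ℝ) < q * x + 1 := Int.ceil_lt_add_one _
  have hcge : q * x ≤ (⌈q * x⌉ : ℝ) := Int.le_ceil _
  rcases le_total (M : ℕ) ((⌈q * x⌉ - 1).toNat) with h | h
  · have hd : dig M q x = M := min_eq_left h
    have h' : (M : ℤ) ≤ ⌈q * x⌉ - 1 := by
      have := Int.toNat_of_nonneg (by omega : (0:ℤ) ≤ ⌈q * x⌉ - 1)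
      omega
    have : (M : ℝ) ≤ (⌈q * x⌉ : ℝ) - 1 := by exact_mod_cast h'
    constructor
    · rw [hd]; linarith
    · rw [hd]; linarith
  · have hd : dig M q x = (⌈q * x⌉ - 1).toNat := min_eq_right h
    have h0 : (0:ℤ) ≤ ⌈q * x⌉ - 1 := by omega
    have hcast : ((⌈q * x⌉ - 1).toNat : ℝ) = (⌈q * x⌉ : ℝ) - 1 := by
      have h := Int.toNat_of_nonneg h0
      exact_mod_cast congrArg (Int.cast : ℤ → ℝ) h
    constructor
    · rw [hd, hcast]; linarith
    · rw [hd, hcast]; linarith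

lemma dig_eq (hq : 1 < q) (hqM : q ≤ M + 1) (hx0 : 0 < x) (hx1 : x ≤ 1)
    {d : ℕ} (hdM : d ≤ M) (h1 : (d : ℝ) < q * x) (h2 : q * x ≤ d + 1) :
    dig M q x = d := by
  obtain ⟨hl, hr⟩ := dig_prop hq hqM hx0 hx1 (M := M)
  have h3 : (dig M q x : ℝ) < (d : ℝ) + 1 := lt_of_lt_of_le hl h2
  have h4 : (d : ℝ) < (dig M q x : ℝ) + 1 := lt_of_lt_of_le h1 hr
  have h3' : dig M q x < d + 1 := by exact_mod_cast h3
  have h4' : d < dig M q x + 1 := by exact_mod_cast h4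
  omega

lemma dig_mono (hq : 0 < q) (hxy : x ≤ y) : dig M q x ≤ dig M q y := by
  apply min_le_min le_rfl
  apply Int.toNat_le_toNat
  have := Int.ceil_le_ceil (R := ℝ) (mul_le_mul_of_nonneg_left hxy hq.le)
  omega

lemma rem_mem (hq : 1 < q) (hqM : q ≤ M + 1) (hx0 : 0 < x) (hx1 : x ≤ 1) :
    ∀ n, 0 < rem M q x n ∧ rem M q x n ≤ 1 := by
  intro n
  induction n with
  | zero => exact ⟨hx0, hx1⟩
  | succ n ih =>
    obtain ⟨h0, h1⟩ := ih
    obtain ⟨hl, hr⟩ := dig_prop hq hqM h0 h1 (M := M)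
    constructor
    · simp only [rem]; linarith
    · simp only [rem]; linarith

lemma rem_add (M : ℕ) (q x : ℝ) (n : ℕ) :
    ∀ i, rem M q x (n + i) = rem M q (rem M q x n) i := by
  intro i
  induction i with
  | zero => rfl
  | succ i ih =>
    have h : n + (i + 1) = (n + i) + 1 := rfl
    rw [h, rem, rem, ih]

lemma shiftn_seq (M : ℕ) (q x : ℝ) (n : ℕ) :
    shiftn (seq M q x) n = seq M q (rem M q x n) := by
  funext i
  simp only [shiftn, seq, rem_add]

noncomputable def valQ (q : ℝ) (b : ℕ → ℕ) : ℝ := ∑' i, (b i : ℝ) / q ^ (i + 1)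

variable {M : ℕ} {q x : ℝ} {b : ℕ → ℕ}

lemma summable_geom_aux (hq : 1 < q) (c : ℝ) :
    Summable (fun i : ℕ => c * (1 / q) ^ (i + 1)) := by
  have h0 : (0:ℝ) < q := lt_trans one_pos hq
  have hr : |1 / q| < 1 := by
    rw [abs_of_pos (by positivity), div_lt_one h0]; exact hq
  have h2 : Summable (fun i : ℕ => (1 / q) ^ (i + 1)) := by
    simpa [pow_succ'] using (summable_geometric_of_abs_lt_one hr).mul_left (1 / q)
  exact h2.mul_left c

lemma summable_val (hq : 1 < q) (hb : ∀ i, b i ≤ M) :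
    Summable (fun i => (b i : ℝ) / q ^ (i + 1)) := by
  have h0 : (0:ℝ) < q := lt_trans one_pos hq
  apply Summable.of_nonneg_of_le (fun i => by positivity)
    (fun i => ?_) (summable_geom_aux hq (M : ℝ))
  rw [div_pow, one_pow, mul_one_div]
  gcongr
  exact_mod_cast hb i

lemma valQ_nonneg (hq : 1 < q) (b : ℕ → ℕ) : 0 ≤ valQ q b := by
  have h0 : (0:ℝ) < q := lt_trans one_pos hq
  exact tsum_nonneg fun i => by positivity

lemma valQ_pos (hq : 1 < q) (hb : ∀ i, b i ≤ M) {j : ℕ} (hj : b j ≠ 0) :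
    0 < valQ q b := by
  have h0 : (0:ℝ) < q := lt_trans one_pos hq
  have h1 : (0:ℝ) < (b j : ℝ) / q ^ (j + 1) := by
    have : (0:ℝ) < (b j : ℝ) := by exact_mod_cast Nat.pos_of_ne_zero hj
    positivity
  refine lt_of_lt_of_le h1 (Summable.le_tsum (summable_val hq hb) j fun i _ => by positivity)

/-- Splitting off the first n terms. -/
lemma valQ_shift (hq : 1 < q) (hb : ∀ i, b i ≤ M) (n : ℕ) :
    valQ q b = (∑ i ∈ Finset.range n, (b i : ℝ) / q ^ (i + 1))
      + (1 / q ^ n) * valQ q (shiftn b n) := by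
  have h0 : (0:ℝ) < q := lt_trans one_pos hq
  have hs := summable_val hq hb
  have hsplit := Summable.sum_add_tsum_nat_add n hs
  have heq : ∀ i : ℕ, (b (i + n) : ℝ) / q ^ (i + n + 1)
      = (1 / q ^ n) * ((shiftn b n i : ℝ) / q ^ (i + 1)) := by
    intro i
    show (b (i + n) : ℝ) / q ^ (i + n + 1) = 1 / q ^ n * ((b (n + i) : ℝ) / q ^ (i + 1))
    rw [Nat.add_comm n i, show i + n + 1 = n + (i + 1) from by omega, pow_add]
    field_simp
  rw [valQ, ← hsplit]
  congr 1
  rw [tsum_congr heq, tsum_mul_left]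
  rfl

lemma sum_range_rem (hq : 1 < q) (n : ℕ) :
    ∑ i ∈ Finset.range n, (seq M q x i : ℝ) / q ^ (i + 1) = x - rem M q x n / q ^ n := by
  have h0 : (0:ℝ) < q := lt_trans one_pos hq
  induction n with
  | zero => simp [rem]
  | succ n ih =>
    rw [Finset.sum_range_succ, ih, seq]
    have hqn : (q : ℝ) ^ n ≠ 0 := by positivity
    have hqn1 : (q : ℝ) ^ (n + 1) ≠ 0 := by positivity
    rw [show rem M q x (n + 1) = q * rem M q x n - dig M q (rem M q x n) from rfl]
    field_simp
    ring

lemma hasSum_seq (hq : 1 < q) (hqM : q ≤ M + 1) (hx0 : 0 < x) (hx1 : x ≤ 1) :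
    HasSum (fun i => (seq M q x i : ℝ) / q ^ (i + 1)) x := by
  have h0 : (0:ℝ) < q := lt_trans one_pos hq
  rw [hasSum_iff_tendsto_nat_of_nonneg (fun i => by positivity)]
  have hrem : ∀ n, 0 < rem M q x n ∧ rem M q x n ≤ 1 := rem_mem hq hqM hx0 hx1
  have h1 : Tendsto (fun n : ℕ => rem M q x n / q ^ n) atTop (nhds 0) := by
    apply squeeze_zero (fun n => by have := (hrem n).1; positivity)
      (g := fun n : ℕ => (1 / q) ^ n)
    · intro n
      rw [div_pow, one_pow]
      gcongr
      exact (hrem n).2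
    · exact tendsto_pow_atTop_nhds_zero_of_lt_one (by positivity)
        (by rw [div_lt_one h0]; exact hq)
  have := h1.const_sub x
  simp only [sub_zero] at this
  refine this.congr fun n => ?_
  rw [sum_range_rem hq]


lemma shifts_le_one (hq : 1 < q) (hqM : q ≤ M + 1) (hb : ∀ i, b i ≤ M)
    (hval : valQ q b = 1) (hsh : ∀ n, seqLe (shiftn b n) b) :
    ∀ n, valQ q (shiftn b n) ≤ 1 := by
  have h0 : (0:ℝ) < q := lt_trans one_pos hq
  have hbsh : ∀ n i, shiftn b n i ≤ M := fun n i => hb _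
  have hbdd : ∀ n, valQ q (shiftn b n) ≤ ∑' i : ℕ, (M:ℝ) * (1/q)^(i+1) := by
    intro n
    apply Summable.tsum_le_tsum _ (summable_val hq (hbsh n)) (summable_geom_aux hq M)
    intro i
    rw [div_pow, one_pow, mul_one_div]
    gcongr
    exact_mod_cast hbsh n i
  have hbddA : BddAbove (Set.range (fun n => valQ q (shiftn b n))) :=
    ⟨∑' i : ℕ, (M:ℝ) * (1/q)^(i+1), by rintro _ ⟨n, rfl⟩; exact hbdd n⟩
  set s : ℝ := sSup (Set.range (fun n => valQ q (shiftn b n))) with hsdef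
  have hvs : ∀ n, valQ q (shiftn b n) ≤ s := fun n => le_csSup hbddA (Set.mem_range_self n)
  have hkey : 1 < s → ∀ n, valQ q (shiftn b n) ≤ 1 + (s - 1)/q := by
    intro hs1 n
    rcases hsh n with h | h
    · obtain ⟨k, hpre, hk⟩ := h
      have e1 : valQ q (shiftn b n) = (∑ i ∈ Finset.range (k+1), (shiftn b n i : ℝ)/q^(i+1))
          + (1/q^(k+1)) * valQ q (shiftn b (n+(k+1))) := by
        have h' := valQ_shift hq (hbsh n) (k+1)
        rw [shiftn_shiftn] at h'
        exact h'
      have e2 := valQ_shift hq hb (k+1)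
      rw [hval] at e2
      have hqk : (0:ℝ) < q^(k+1) := by positivity
      have hsum : ∑ i ∈ Finset.range (k+1), (shiftn b n i : ℝ)/q^(i+1)
          ≤ (∑ i ∈ Finset.range (k+1), (b i : ℝ)/q^(i+1)) - 1/q^(k+1) := by
        rw [Finset.sum_range_succ, Finset.sum_range_succ]
        have h1 : ∑ i ∈ Finset.range k, (shiftn b n i:ℝ)/q^(i+1)
            = ∑ i ∈ Finset.range k, (b i:ℝ)/q^(i+1) :=
          Finset.sum_congr rfl fun i hi => by rw [hpre i (Finset.mem_range.mp hi)]
        rw [h1]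
        have h2 : (shiftn b n k : ℝ) + 1 ≤ (b k : ℝ) := by exact_mod_cast hk
        have h3 : (shiftn b n k:ℝ)/q^(k+1) ≤ ((b k:ℝ) - 1)/q^(k+1) := by
          gcongr
          linarith
        rw [sub_div] at h3
        linarith
      have hv1 : 0 ≤ valQ q (shiftn b (k+1)) := valQ_nonneg hq _
      have hv2 : valQ q (shiftn b (n+(k+1))) ≤ s := hvs _
      have hmul : (1/q^(k+1)) * valQ q (shiftn b (n+(k+1))) ≤ (1/q^(k+1)) * s :=
        mul_le_mul_of_nonneg_left hv2 (by positivity)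
      have hsum2 : (∑ i ∈ Finset.range (k+1), (b i : ℝ)/q^(i+1)) ≤ 1 := by
        have : 0 ≤ (1/q^(k+1)) * valQ q (shiftn b (k+1)) := by positivity
        linarith
      have hstep : valQ q (shiftn b n) ≤ 1 + (s-1)/q^(k+1) := by
        have heq : 1 - 1/q^(k+1) + (1/q^(k+1)) * s = 1 + (s-1)/q^(k+1) := by
          field_simp
          ring
        calc valQ q (shiftn b n)
            ≤ (∑ i ∈ Finset.range (k+1), (b i : ℝ)/q^(i+1)) - 1/q^(k+1)
              + (1/q^(k+1)) * s := by rw [e1]; linarith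
        _ ≤ 1 - 1/q^(k+1) + (1/q^(k+1)) * s := by linarith
        _ = 1 + (s-1)/q^(k+1) := heq
      have hle : (s-1)/q^(k+1) ≤ (s-1)/q := by
        apply div_le_div_of_nonneg_left (by linarith) h0
        calc q = q^1 := (pow_one q).symm
        _ ≤ q^(k+1) := pow_le_pow_right₀ hq.le (by omega)
      linarith
    · have he : valQ q (shiftn b n) = 1 := by rw [h, hval]
      rw [he]
      have : 0 ≤ (s-1)/q := div_nonneg (by linarith) h0.le
      linarith
  have hs1 : s ≤ 1 := by
    by_contra hcon
    push_neg at hcon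
    have hsle : s ≤ 1 + (s-1)/q := by
      apply csSup_le ⟨valQ q (shiftn b 0), Set.mem_range_self 0⟩
      rintro _ ⟨n, rfl⟩; exact hkey hcon n
    have hlt : (s-1)/q < s - 1 := div_lt_self (by linarith) hq
    linarith
  intro n
  exact le_trans (hvs n) hs1

lemma eq_seq_of (hq : 1 < q) (hqM : q ≤ M + 1) (hb : ∀ i, b i ≤ M)
    (hval : valQ q b = 1) (hsh : ∀ n, seqLe (shiftn b n) b)
    (hnz : ∀ N, ∃ i, N ≤ i ∧ b i ≠ 0) : b = seq M q 1 := by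
  have h0 : (0:ℝ) < q := lt_trans one_pos hq
  have hbsh : ∀ n i, shiftn b n i ≤ M := fun n i => hb _
  set v : ℕ → ℝ := fun n => valQ q (shiftn b n) with hv
  have hvpos : ∀ n, 0 < v n := by
    intro n
    obtain ⟨i, hiN, hine⟩ := hnz n
    apply valQ_pos hq (hbsh n) (j := i - n)
    show b (n + (i - n)) ≠ 0
    rw [show n + (i - n) = i from by omega]
    exact hine
  have hvle : ∀ n, v n ≤ 1 := shifts_le_one hq hqM hb hval hsh
  have hrec : ∀ n, v (n+1) = q * v n - b n := by
    intro n
    have h' := valQ_shift hq (hbsh n) 1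
    rw [shiftn_shiftn] at h'
    have h1 : ∑ i ∈ Finset.range 1, (shiftn b n i : ℝ)/q^(i+1) = (b n : ℝ)/q := by
      rw [Finset.sum_range_one]
      norm_num [shiftn]
    rw [h1] at h'
    have : v n = (b n:ℝ)/q + (1/q^1) * v (n+1) := h'
    rw [pow_one] at this
    field_simp at this
    linarith
  have hv0 : v 0 = 1 := by rw [hv]; simp only [shiftn_zero]; exact hval
  have hdig : ∀ n, dig M q (v n) = b n := by
    intro n
    apply dig_eq hq hqM (hvpos n) (hvle n) (hb n)
    · have := hvpos (n+1); rw [hrec n] at this; linarith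
    · have := hvle (n+1); rw [hrec n] at this; linarith
  have hrem : ∀ n, rem M q 1 n = v n := by
    intro n
    induction n with
    | zero => exact hv0.symm
    | succ n ih =>
      show q * rem M q 1 n - dig M q (rem M q 1 n) = v (n+1)
      rw [ih, hdig n, hrec n]
  funext n
  show b n = dig M q (rem M q 1 n)
  rw [hrem n, hdig n]

lemma one_le_partial_of_lt (hq : 1 < q) (hqM : q ≤ M + 1) (hb : ∀ i, b i ≤ M)
    (hlt : seqLt (seq M q 1) b) :
    ∃ n, (1:ℝ) ≤ ∑ i ∈ Finset.range (n+1), (b i : ℝ)/q^(i+1) := by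
  have h0 : (0:ℝ) < q := lt_trans one_pos hq
  obtain ⟨n, hpre, hn⟩ := hlt
  refine ⟨n, ?_⟩
  have hrem := rem_mem hq hqM one_pos le_rfl (M := M)
  have h1 : ∑ i ∈ Finset.range n, (b i:ℝ)/q^(i+1) = 1 - rem M q 1 n / q^n := by
    rw [← sum_range_rem hq]
    exact Finset.sum_congr rfl fun i hi => by
      rw [← hpre i (Finset.mem_range.mp hi)]
  rw [Finset.sum_range_succ, h1]
  have h2 : (seq M q 1 n : ℝ) + 1 ≤ (b n : ℝ) := by exact_mod_cast hn
  have h3 : q * rem M q 1 n ≤ (seq M q 1 n : ℝ) + 1 :=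
    (dig_prop hq hqM (hrem n).1 (hrem n).2).2
  have h4 : rem M q 1 n / q^n = (q * rem M q 1 n)/q^(n+1) := by
    rw [pow_succ]
    field_simp
  have h5 : rem M q 1 n / q^n ≤ (b n:ℝ)/q^(n+1) := by
    rw [h4]
    gcongr
    linarith
  linarith

lemma one_le_val_of_lt (hq : 1 < q) (hqM : q ≤ M + 1) (hb : ∀ i, b i ≤ M)
    (hlt : seqLt (seq M q 1) b) : 1 ≤ valQ q b := by
  have h0 : (0:ℝ) < q := lt_trans one_pos hq
  obtain ⟨n, hn⟩ := one_le_partial_of_lt hq hqM hb hlt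
  exact le_trans hn (Summable.sum_le_tsum _ (fun i _ => by positivity) (summable_val hq hb))

lemma one_lt_val_of_lt (hq : 1 < q) (hqM : q ≤ M + 1) (hb : ∀ i, b i ≤ M)
    (hlt : seqLt (seq M q 1) b) (hnz : ∀ N, ∃ i, N ≤ i ∧ b i ≠ 0) :
    1 < valQ q b := by
  have h0 : (0:ℝ) < q := lt_trans one_pos hq
  obtain ⟨n, hn⟩ := one_le_partial_of_lt hq hqM hb hlt
  have hsplit := valQ_shift hq hb (n+1)
  have hpos : 0 < valQ q (shiftn b (n+1)) := by
    obtain ⟨i, hiN, hine⟩ := hnz (n+1)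
    apply valQ_pos hq (fun i => hb _) (j := i - (n+1))
    show b ((n+1) + (i - (n+1))) ≠ 0
    rw [show (n+1) + (i - (n+1)) = i from by omega]
    exact hine
  have : 0 < (1/q^(n+1)) * valQ q (shiftn b (n+1)) := by positivity
  linarith [hsplit, hn]


lemma seq_mono {y : ℝ} (hq : 1 < q) (hqM : q ≤ M + 1) (hx0 : 0 < x) (hxy : x ≤ y)
    (hy1 : y ≤ 1) : seqLe (seq M q x) (seq M q y) := by
  classical
  by_cases heq : seq M q x = seq M q y
  · exact Or.inr heq
  · obtain ⟨n, hn⟩ : ∃ n, seq M q x n ≠ seq M q y n := Function.ne_iff.mp heq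
    have hex : ∃ n, seq M q x n ≠ seq M q y n := ⟨n, hn⟩
    have hpre : ∀ i < Nat.find hex, seq M q x i = seq M q y i :=
      fun i hi => not_not.mp (Nat.find_min hex hi)
    have hrem : ∀ m, m ≤ Nat.find hex → rem M q x m ≤ rem M q y m := by
      intro m
      induction m with
      | zero => intro _; exact hxy
      | succ m ih =>
        intro hm
        have h1 := ih (by omega)
        have hdig : dig M q (rem M q x m) = dig M q (rem M q y m) := hpre m (by omega)
        show q * rem M q x m - dig M q (rem M q x m)
          ≤ q * rem M q y m - dig M q (rem M q y m)
        rw [hdig]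
        have : q * rem M q x m ≤ q * rem M q y m := by nlinarith
        linarith
    left
    refine ⟨Nat.find hex, hpre, ?_⟩
    have hle : seq M q x (Nat.find hex) ≤ seq M q y (Nat.find hex) :=
      dig_mono (lt_trans one_pos hq) (hrem _ le_rfl)
    exact lt_of_le_of_ne hle (Nat.find_spec hex)

lemma shift_seq_le (hq : 1 < q) (hqM : q ≤ M + 1) (n : ℕ) :
    seqLe (shiftn (seq M q 1) n) (seq M q 1) := by
  rw [shiftn_seq]
  exact seq_mono hq hqM (rem_mem hq hqM one_pos le_rfl n).1
    (rem_mem hq hqM one_pos le_rfl n).2 le_rfl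

lemma seq_tail_ne (hq : 1 < q) (hqM : q ≤ M + 1) (N : ℕ) :
    ∃ i, N ≤ i ∧ seq M q 1 i ≠ 0 := by
  by_contra h
  push_neg at h
  have hrem := rem_mem hq hqM one_pos le_rfl (M := M)
  have hgrow : ∀ k, rem M q 1 (N + k) = q^k * rem M q 1 N := by
    intro k
    induction k with
    | zero => simp
    | succ k ih =>
      have hz : dig M q (rem M q 1 (N + k)) = 0 := h (N + k) (by omega)
      show q * rem M q 1 (N + k) - dig M q (rem M q 1 (N + k)) = _
      rw [hz, ih, pow_succ]
      push_cast
      ring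
  obtain ⟨k, hk⟩ := pow_unbounded_of_one_lt (1 / rem M q 1 N) hq
  have h1 : 1 < q ^ k * rem M q 1 N := by
    have hN := (hrem N).1
    rw [div_lt_iff₀ hN] at hk
    nlinarith
  have h2 := (hrem (N + k)).2
  rw [hgrow k] at h2
  linarith

lemma isQG_seq (hq : 1 < q) (hqM : q ≤ M + 1) : isQuasiGreedy M q (seq M q 1) := by
  refine ⟨fun i => dig_le M q _, seq_tail_ne hq hqM, (hasSum_seq hq hqM one_pos le_rfl).tsum_eq,
    fun c hc hcnz hcsum => ?_⟩
  rcases seqLe_or_lt c (seq M q 1) with h | h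
  · exact h
  · exact absurd hcsum (by have := one_lt_val_of_lt hq hqM hc h hcnz; rw [valQ] at this; linarith)

lemma isQG_unique {a a' : ℕ → ℕ} (h : isQuasiGreedy M q a) (h' : isQuasiGreedy M q a') :
    a = a' := by
  have h1 := h'.2.2.2 a h.1 h.2.1 h.2.2.1
  have h2 := h.2.2.2 a' h'.1 h'.2.1 h'.2.2.1
  exact seqLe_antisymm h1 h2

lemma alphaF_eq (hq : 1 < q) (hqM : q ≤ M + 1) : alphaF M q = seq M q 1 := by
  have hex : ∃ a, isQuasiGreedy M q a := ⟨seq M q 1, isQG_seq hq hqM⟩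
  have : alphaF M q = hex.choose := by
    rw [alphaF, dif_pos hex]
  rw [this]
  exact isQG_unique hex.choose_spec (isQG_seq hq hqM)

lemma isQG_alphaF (hq : 1 < q) (hqM : q ≤ M + 1) : isQuasiGreedy M q (alphaF M q) := by
  rw [alphaF_eq hq hqM]
  exact isQG_seq hq hqM

lemma alphaF_strictMono {p : ℝ} (hp : 1 < p) (hpM : p ≤ M + 1) (hq : 1 < q)
    (hqM : q ≤ M + 1) (hpq : p < q) : seqLt (alphaF M p) (alphaF M q) := by
  have h0p : (0:ℝ) < p := lt_trans one_pos hp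
  have h0q : (0:ℝ) < q := lt_trans one_pos hq
  have hQGp := isQG_alphaF hp hpM (M := M)
  have hQGq := isQG_alphaF hq hqM (M := M)
  obtain ⟨j, -, hj⟩ := hQGp.2.1 0
  have hvala : valQ q (alphaF M p) < 1 := by
    have hlt : valQ q (alphaF M p) < valQ p (alphaF M p) := by
      refine Summable.tsum_lt_tsum_of_nonneg (i := j) (fun i => by positivity) (fun i => ?_) ?_
        (summable_val hp hQGp.1)
      · exact div_le_div_of_nonneg_left (Nat.cast_nonneg _) (pow_pos h0p _)
          (pow_le_pow_left₀ h0p.le hpq.le _)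
      · apply div_lt_div_of_pos_left
        · exact_mod_cast Nat.pos_of_ne_zero hj
        · positivity
        · exact pow_lt_pow_left₀ hpq h0p.le (by omega)
    have : valQ p (alphaF M p) = 1 := hQGp.2.2.1
    linarith
  rcases seqLe_or_lt (alphaF M p) (alphaF M q) with h | h
  · rcases h with h | h
    · exact h
    · exfalso
      have : valQ q (alphaF M p) = 1 := by rw [h]; exact hQGq.2.2.1
      linarith
  · exfalso
    rw [alphaF_eq hq hqM] at h
    have := one_le_val_of_lt hq hqM hQGp.1 h
    linarith


lemma exists_q (hM : 1 ≤ M) {a : ℕ → ℕ} (ha1 : ∀ i, a i ≤ M)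
    (ha2 : ∀ N, ∃ i, N ≤ i ∧ a i ≠ 0) (ha3 : ∀ n, seqLe (shiftn a n) a) :
    ∃ q, q ∈ Set.Ioc (1:ℝ) ((M:ℝ)+1) ∧ alphaF M q = a := by
  have hMR : (1:ℝ) ≤ (M:ℝ) := by exact_mod_cast hM
  obtain ⟨j1, -, hj1⟩ := ha2 0
  obtain ⟨j2, hj2ge, hj2⟩ := ha2 (j1+1)
  set K := j2 + 1 with hK
  have hKR : (0:ℝ) < (K:ℝ)⁻¹ := by positivity
  set t0 : ℝ := (2:ℝ) ^ ((K:ℝ)⁻¹) with ht0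
  have ht01 : 1 < t0 :=
    (Real.one_lt_rpow_iff_of_pos (by norm_num)).mpr (Or.inl ⟨one_lt_two, hKR⟩)
  have ht02 : t0 ≤ 2 := by
    calc t0 ≤ (2:ℝ) ^ (1:ℝ) := by
          apply Real.rpow_le_rpow_of_exponent_le one_le_two
          rw [inv_le_one_iff₀]
          right
          exact_mod_cast Nat.one_le_iff_ne_zero.mpr (by omega)
    _ = 2 := Real.rpow_one 2
  have ht0M : t0 ≤ (M:ℝ)+1 := by linarith
  have ht0pow : t0 ^ K = 2 := by
    rw [ht0, ← Real.rpow_natCast ((2:ℝ) ^ ((K:ℝ)⁻¹)) K, ← Real.rpow_mul (by norm_num)]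
    rw [inv_mul_cancel₀ (by positivity : (K:ℝ) ≠ 0), Real.rpow_one]
  set f : ℝ → ℝ := fun t => ∑' i : ℕ, (a i : ℝ)/t^(i+1) with hf
  have hcont : ContinuousOn f (Set.Icc t0 ((M:ℝ)+1)) := by
    apply continuousOn_tsum (u := fun i => (M:ℝ) * (1/t0)^(i+1))
    · intro i
      apply ContinuousOn.div continuousOn_const (by fun_prop)
      intro t ht
      have h1t : 1 < t := lt_of_lt_of_le ht01 ht.1
      positivity
    · exact summable_geom_aux ht01 M
    · intro i t ht
      have h1t : 1 < t := lt_of_lt_of_le ht01 ht.1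
      rw [Real.norm_eq_abs, abs_of_nonneg (by positivity), div_pow, one_pow, mul_one_div]
      apply div_le_div₀ (by positivity) (by exact_mod_cast ha1 i) (by positivity)
      exact pow_le_pow_left₀ (by positivity) ht.1 _
  have hft0 : 1 ≤ f t0 := by
    have hne : j1 ≠ j2 := by omega
    have hsum2 : (∑ i ∈ ({j1, j2} : Finset ℕ), (a i:ℝ)/t0^(i+1)) ≤ f t0 :=
      Summable.sum_le_tsum _ (fun i _ => by positivity) (summable_val ht01 ha1)
    rw [Finset.sum_pair hne] at hsum2
    have h1 : (1:ℝ) ≤ (a j1:ℝ) := by exact_mod_cast Nat.pos_of_ne_zero hj1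
    have h2 : (1:ℝ) ≤ (a j2:ℝ) := by exact_mod_cast Nat.pos_of_ne_zero hj2
    have hp1 : t0^(j1+1) ≤ t0^K := pow_le_pow_right₀ ht01.le (by omega)
    have e1 : (1:ℝ)/t0^K ≤ (a j1:ℝ)/t0^(j1+1) :=
      div_le_div₀ (by linarith) h1 (by positivity) hp1
    have e2 : (1:ℝ)/t0^K ≤ (a j2:ℝ)/t0^(j2+1) :=
      div_le_div₀ (by linarith) h2 (by positivity) (le_of_eq (by rw [hK]))
    have : (2:ℝ)/t0^K ≤ f t0 := by
      rw [show (2:ℝ)/t0^K = 1/t0^K + 1/t0^K from by ring]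
      linarith
    rw [ht0pow] at this
    linarith
  have hfM : f ((M:ℝ)+1) ≤ 1 := by
    have hM1 : 1 < (M:ℝ)+1 := by linarith
    have hle : f ((M:ℝ)+1) ≤ ∑' i : ℕ, (M:ℝ) * (1/((M:ℝ)+1))^(i+1) := by
      apply Summable.tsum_le_tsum _ (summable_val hM1 ha1) (summable_geom_aux hM1 M)
      intro i
      rw [div_pow, one_pow, mul_one_div]
      gcongr
      exact_mod_cast ha1 i
    have hval : ∑' i : ℕ, (M:ℝ) * (1/((M:ℝ)+1))^(i+1) = 1 := by
      have hr : |1/((M:ℝ)+1)| < 1 := by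
        rw [abs_of_pos (by positivity), div_lt_one (by positivity)]
        linarith
      have h1 : ∑' i : ℕ, (1/((M:ℝ)+1))^(i+1) = (1/((M:ℝ)+1)) * (1 - 1/((M:ℝ)+1))⁻¹ := by
        rw [tsum_congr (fun i => pow_succ' (1/((M:ℝ)+1)) i), tsum_mul_left,
          tsum_geometric_of_abs_lt_one hr]
      rw [tsum_mul_left, h1]
      have hM0 : (M:ℝ) ≠ 0 := by linarith
      have hM10 : (M:ℝ)+1 ≠ 0 := by linarith
      field_simp
      rw [add_sub_cancel_right, div_self hM0]
    linarith
  have hivt := intermediate_value_Icc' ht0M hcont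
  obtain ⟨q, hqmem, hfq⟩ := hivt ⟨hfM, hft0⟩
  have hq1 : 1 < q := lt_of_lt_of_le ht01 hqmem.1
  have hqM : q ≤ (M:ℝ)+1 := hqmem.2
  refine ⟨q, ⟨hq1, hqM⟩, ?_⟩
  rw [alphaF_eq hq1 hqM]
  exact (eq_seq_of hq1 hqM ha1 hfq ha3 ha2).symm

end QG

/-- The map q ↦ α(q) is strictly increasing and maps (1, M+1] bijectively onto
the set of sequences in Ω_M not ending in 0^∞ and satisfying σⁿ((a_i)) ≼ (a_i) for all n ≥ 0. -/
theorem statement0 (M : ℕ) (hM : 1 ≤ M) :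
    (∀ q ∈ Set.Ioc (1:ℝ) ((M:ℝ)+1), isQuasiGreedy M q (alphaF M q)) ∧
    (∀ p ∈ Set.Ioc (1:ℝ) ((M:ℝ)+1), ∀ q ∈ Set.Ioc (1:ℝ) ((M:ℝ)+1),
      p < q → seqLt (alphaF M p) (alphaF M q)) ∧
    Set.BijOn (alphaF M) (Set.Ioc (1:ℝ) ((M:ℝ)+1))
      {a : ℕ → ℕ | (∀ i, a i ≤ M) ∧ (∀ N, ∃ i, N ≤ i ∧ a i ≠ 0) ∧
        ∀ n, seqLe (shiftn a n) a} := by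
  refine ⟨?_, ?_, ?_, ?_, ?_⟩
  · rintro q ⟨hq1, hqM⟩
    exact QG.isQG_alphaF hq1 hqM
  · rintro p ⟨hp1, hpM⟩ q ⟨hq1, hqM⟩ hpq
    exact QG.alphaF_strictMono hp1 hpM hq1 hqM hpq
  · rintro q ⟨hq1, hqM⟩
    rw [QG.alphaF_eq hq1 hqM]
    exact ⟨fun i => QG.dig_le M q _, QG.seq_tail_ne hq1 hqM, QG.shift_seq_le hq1 hqM⟩
  · rintro p ⟨hp1, hpM⟩ q ⟨hq1, hqM⟩ heq
    by_contra hne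
    rcases lt_or_gt_of_ne hne with h | h
    · have := QG.alphaF_strictMono hp1 hpM hq1 hqM h
      rw [heq] at this
      exact QG.seqLt_irrefl _ this
    · have := QG.alphaF_strictMono hq1 hqM hp1 hpM h
      rw [heq] at this
      exact QG.seqLt_irrefl _ this
  · rintro a ⟨ha1, ha2, ha3⟩
    obtain ⟨q, hq, hqa⟩ := QG.exists_q hM ha1 ha2 ha3
    exact ⟨q, hq, hqa⟩
end

section
/- For a ∈ A_M and b ∈ A_1, Φ_{a∘b}^{−1} = Φ_a^{−1} ∘ Φ_b^{−1}: for every finite or infinite {0,1}-word x whose first digit is 1, Φ_{a∘b}^{−1}(x) = Φ_a^{−1}(Φ_b^{−1}(x)). (Here a∘b ∈ A_M, and Φ_b^{−1}(x) is a {0,1}-word whose first digit is 1, so both sides are defined.) -/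
open Filter Set

/-!
Run the automaton from an arbitrary start state `p` (the bit read before the input). Since `b`
ends in `0` and the last digit of `a` is `< M`, each of the four blocks of `a ∘ b` is the image
under `Φ_a⁻¹` of the corresponding block of `b`, started in the same state: `(a ∘ b)⁺ = Φ_a⁻¹(b⁺)`,
and reflecting both the input and the start state of `Φ_a⁻¹` reflects its output. Every block
of `b` ends in the bit that selected it, so after each block the automaton for `a` is again in
the state the automaton for `a ∘ b` is in, and the identity follows by induction on the input.
Infinite inputs are handled through their prefixes.
-/

def phiInvFrom (M : ℕ) (a : List ℕ) : ℕ → List ℕ → List ℕ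
  | _, [] => []
  | p, d :: w => block M a p d ++ phiInvFrom M a d w

section PhiInvFrom

variable {M : ℕ} {a : List ℕ}

lemma phiInvFrom_append (p : ℕ) (u v : List ℕ) :
    phiInvFrom M a p (u ++ v) = phiInvFrom M a p u ++ phiInvFrom M a (u.getLastD p) v := by
  induction u generalizing p with
  | nil => rfl
  | cons d u ih => rw [List.cons_append, phiInvFrom, phiInvFrom, ih, List.append_assoc,
      List.getLastD_cons]

lemma phiInvFrom_eq_flatMap (p : ℕ) (w : List ℕ) :
    phiInvFrom M a p w = (List.range w.length).flatMap
      (fun i => block M a (if i = 0 then p else w.getD (i - 1) 0) (w.getD i 0)) := by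
  induction w generalizing p with
  | nil => rfl
  | cons d w ih =>
    rw [List.length_cons, List.range_succ_eq_map, List.flatMap_cons, List.flatMap_map,
      phiInvFrom, ih]
    congr 2
    funext i
    cases i <;> simp

lemma phiInv_eq_phiInvFrom (w : List ℕ) : phiInv M a w = phiInvFrom M a 0 w :=
  (phiInvFrom_eq_flatMap 0 w).symm

lemma length_block (ha : a ≠ []) (p q : ℕ) : (block M a p q).length = a.length := by
  have : a.length ≠ 0 := by simpa using ha
  unfold block
  split_ifs <;> simp [reflW, wplus] <;> omega

lemma length_phiInvFrom (ha : a ≠ []) (p : ℕ) (w : List ℕ) :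
    (phiInvFrom M a p w).length = a.length * w.length := by
  induction w generalizing p with
  | nil => rfl
  | cons d w ih => simp [phiInvFrom, length_block ha, ih, Nat.mul_succ, Nat.add_comm]

lemma pref_succ (x : ℕ → ℕ) (n : ℕ) : pref x (n + 1) = pref x n ++ [x n] := by
  simp [pref, List.range_succ]

lemma getLastD_pref (x : ℕ → ℕ) (n p : ℕ) :
    (pref x n).getLastD p = if n = 0 then p else x (n - 1) := by
  cases n with
  | zero => rfl
  | succ n => rw [pref_succ, List.getLastD_concat]; rfl

lemma getD_phiInvFrom_pref (ha : a ≠ []) (x : ℕ → ℕ) {n j : ℕ} (hj : j < a.length * n) :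
    (phiInvFrom M a 0 (pref x n)).getD j 0 = phiInvSeq M a x j := by
  induction n with
  | zero => simp at hj
  | succ n ih =>
    have hlen : (phiInvFrom M a 0 (pref x n)).length = a.length * n := by
      simp [length_phiInvFrom ha, pref]
    rw [pref_succ, phiInvFrom_append, getLastD_pref]
    by_cases hjn : j < a.length * n
    · rw [List.getD_append _ _ _ _ (hlen ▸ hjn), ih hjn]
    · have hpos : 0 < a.length := List.length_pos_iff.2 ha
      have hq : j / a.length = n := by
        apply Nat.div_eq_of_lt_le <;> linarith [Nat.mul_comm n a.length, Nat.mul_succ a.length n]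
      have hr : j - a.length * n = j % a.length := by
        rw [Nat.mod_eq_sub_mul_div, hq, Nat.mul_comm]
      rw [List.getD_append_right _ _ _ _ (by omega), hlen, hr, phiInvFrom, phiInvFrom,
        List.append_nil, phiInvSeq, hq]

lemma pref_phiInvSeq (ha : a ≠ []) (x : ℕ → ℕ) (n : ℕ) :
    pref (phiInvSeq M a x) (a.length * n) = phiInvFrom M a 0 (pref x n) := by
  refine List.ext_getElem (by simp [pref, length_phiInvFrom ha]) fun j h₁ h₂ => ?_
  rw [← List.getD_eq_getElem _ 0 h₂, getD_phiInvFrom_pref ha x (by simpa [pref] using h₁)]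
  simp [pref]

end PhiInvFrom

lemma wordLt_singleton {x y : ℕ} (h : wordLt [x] [y]) : x < y := by
  obtain ⟨n, -, hlt⟩ := h
  cases n <;> simp_all [wordSeq]

lemma IsFundamental.exists_eq_concat {M : ℕ} {a : List ℕ} (ha : IsFundamental M a) :
    ∃ u c, a = u ++ [c] ∧ (∀ d ∈ u, d ≤ M) ∧ c < M := by
  obtain ⟨hle, ⟨hlen, -, -, hlt⟩ | ⟨hlen, hcmp⟩⟩ := ha
  · obtain ⟨c, rfl⟩ := List.length_eq_one_iff.1 hlen
    exact ⟨[], c, rfl, by simp, by simpa using hlt⟩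
  · obtain ⟨l, c, rfl⟩ := (List.eq_nil_or_concat a).resolve_left (by rintro rfl; simp at hlen)
    obtain ⟨h, t, rfl⟩ := List.exists_cons_of_ne_nil (l := l) (by rintro rfl; simp at hlen)
    rw [List.concat_eq_append] at hle hcmp ⊢
    refine ⟨h :: t, c, rfl, fun d hd => hle d (List.mem_append_left _ hd), ?_⟩
    have hch := wordLt_singleton (by simpa using (hcmp (t.length + 1) (by simp) (by simp)).2)
    have hh : h ≤ M := hle h (by simp)
    omega

section Composition

variable {M : ℕ} {u v : List ℕ} {c : ℕ}

lemma wplus_concat (u : List ℕ) (c : ℕ) : wplus (u ++ [c]) = u ++ [c + 1] := by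
  simp [wplus]

lemma wplus_append {w : List ℕ} (hw : w ≠ []) (u : List ℕ) :
    wplus (u ++ w) = u ++ wplus w := by
  obtain ⟨w, d, rfl⟩ := (List.eq_nil_or_concat w).resolve_left hw
  rw [List.concat_eq_append, ← List.append_assoc, wplus_concat, wplus_concat, List.append_assoc]

lemma reflW_cons (d : ℕ) (w : List ℕ) : reflW M (d :: w) = (M - d) :: reflW M w := rfl

lemma reflW_append (u v : List ℕ) : reflW M (u ++ v) = reflW M u ++ reflW M v :=
  List.map_append

lemma reflW_reflW {w : List ℕ} (hw : ∀ d ∈ w, d ≤ M) : reflW M (reflW M w) = w := by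
  rw [reflW, reflW, List.map_map]
  refine (List.map_congr_left fun d hd => ?_).trans (List.map_id w)
  have := hw d hd
  simp only [Function.comp_apply, id_eq]
  omega

lemma reflW_block (hu : ∀ d ∈ u, d ≤ M) (hc : c < M) {p q : ℕ}
    (hp : p ≤ 1) (hq : q ≤ 1) :
    reflW M (block M (u ++ [c]) p q) = block M (u ++ [c]) (1 - p) (1 - q) := by
  have ha : ∀ d ∈ u ++ [c], d ≤ M := by simpa [or_imp, forall_and] using ⟨hu, hc.le⟩
  have ha' : ∀ d ∈ wplus (u ++ [c]), d ≤ M := by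
    simpa [wplus_concat, or_imp, forall_and] using ⟨hu, hc⟩
  interval_cases p <;> interval_cases q <;> simp [block, reflW_reflW ha, reflW_reflW ha']

lemma block_one (hc : c < M) (p : ℕ) :
    block M (u ++ [c]) p 1 = wplus (block M (u ++ [c]) p 0) := by
  by_cases hp : p = 1
  · subst hp
    simp only [block, ↓reduceIte, zero_ne_one, wplus_concat]
    rw [reflW_append, reflW_append]
    show reflW M u ++ [M - c] = wplus (reflW M u ++ [M - (c + 1)])
    rw [wplus_concat]
    congr 2
    omega
  · simp [block, hp]

lemma phiInvFrom_reflW (hu : ∀ d ∈ u, d ≤ M) (hc : c < M) {w : List ℕ}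
    (hw : ∀ d ∈ w, d ≤ 1) {p : ℕ} (hp : p ≤ 1) :
    phiInvFrom M (u ++ [c]) (1 - p) (reflW 1 w) = reflW M (phiInvFrom M (u ++ [c]) p w) := by
  induction w generalizing p with
  | nil => rfl
  | cons d w ih =>
    have hd : d ≤ 1 := hw d (by simp)
    rw [reflW_cons, phiInvFrom, phiInvFrom, reflW_append, reflW_block hu hc hp hd,
      ih (fun e he => hw e (by simp [he])) hd]

lemma phiInvFrom_wplus (hc : c < M) (p : ℕ) :
    phiInvFrom M (u ++ [c]) p (wplus (v ++ [0])) =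
      wplus (phiInvFrom M (u ++ [c]) p (v ++ [0])) := by
  have hne : block M (u ++ [c]) (v.getLastD p) 0 ≠ [] := by
    simp [← List.length_pos_iff, length_block]
  simp only [wplus_concat, phiInvFrom_append, phiInvFrom, List.append_nil]
  rw [wplus_append hne, block_one hc]

lemma getLastD_block {p q : ℕ} (hp : p ≤ 1) (hq : q ≤ 1) (r : ℕ) :
    (block 1 (v ++ [0]) p q).getLastD r = q := by
  interval_cases p <;> interval_cases q <;> simp [block, reflW, wplus_concat]

lemma block_phiInv (hu : ∀ d ∈ u, d ≤ M) (hc : c < M) (hv : ∀ d ∈ v, d ≤ 1) {p q : ℕ}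
    (hp : p ≤ 1) (hq : q ≤ 1) :
    block M (phiInv M (u ++ [c]) (v ++ [0])) p q =
      phiInvFrom M (u ++ [c]) p (block 1 (v ++ [0]) p q) := by
  have hb : ∀ d ∈ v ++ [0], d ≤ 1 := by simpa [or_imp, forall_and] using hv
  have hb' : ∀ d ∈ wplus (v ++ [0]), d ≤ 1 := by
    simpa [wplus_concat, or_imp, forall_and] using hv
  rw [phiInv_eq_phiInvFrom]
  interval_cases p <;> interval_cases q
  · rfl
  · exact (phiInvFrom_wplus hc 0).symm
  · show reflW M (wplus _) = phiInvFrom M _ (1 - 0) (reflW 1 (wplus (v ++ [0])))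
    rw [← phiInvFrom_wplus hc 0]
    exact (phiInvFrom_reflW hu hc hb' zero_le_one).symm
  · exact (phiInvFrom_reflW hu hc hb zero_le_one).symm

theorem phiInvFrom_phiInv (hu : ∀ d ∈ u, d ≤ M) (hc : c < M) (hv : ∀ d ∈ v, d ≤ 1)
    {x : List ℕ} (hx : ∀ d ∈ x, d ≤ 1) {p : ℕ} (hp : p ≤ 1) :
    phiInvFrom M (phiInv M (u ++ [c]) (v ++ [0])) p x =
      phiInvFrom M (u ++ [c]) p (phiInvFrom 1 (v ++ [0]) p x) := by
  induction x generalizing p with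
  | nil => rfl
  | cons d x ih =>
    have hd : d ≤ 1 := hx d (by simp)
    rw [phiInvFrom, phiInvFrom, phiInvFrom_append, getLastD_block hp hd,
      block_phiInv hu hc hv hp hd, ih (fun e he => hx e (by simp [he])) hd]

theorem phiInvSeq_phiInv (hu : ∀ d ∈ u, d ≤ M) (hc : c < M) (hv : ∀ d ∈ v, d ≤ 1)
    {x : ℕ → ℕ} (hx : ∀ i, x i ≤ 1) :
    phiInvSeq M (phiInv M (u ++ [c]) (v ++ [0])) x =
      phiInvSeq M (u ++ [c]) (phiInvSeq 1 (v ++ [0]) x) := by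
  funext j
  have hlen : (phiInv M (u ++ [c]) (v ++ [0])).length =
      (u ++ [c]).length * (v ++ [0]).length := by
    rw [phiInv_eq_phiInvFrom, length_phiInvFrom (by simp)]
  have hne : phiInv M (u ++ [c]) (v ++ [0]) ≠ [] := List.ne_nil_of_length_pos (hlen ▸ by simp)
  have hj : j < (u ++ [c]).length * (v ++ [0]).length * (j + 1) := by
    calc j < j + 1 := j.lt_succ_self
      _ ≤ _ := Nat.le_mul_of_pos_left _ (by simp)
  have hpref : ∀ d ∈ pref x (j + 1), d ≤ 1 := by simp [pref, hx]
  rw [← getD_phiInvFrom_pref hne x (hlen ▸ hj), phiInvFrom_phiInv hu hc hv hpref zero_le_one,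
    ← pref_phiInvSeq (by simp), ← getD_phiInvFrom_pref (by simp) _ (Nat.mul_assoc .. ▸ hj)]

end Composition

theorem statement3_general (M : ℕ) (a b : List ℕ)
    (ha : IsFundamental M a) (hb : IsFundamental 1 b) :
    (∀ x : List ℕ, (∀ d ∈ x, d ≤ 1) → x.getD 0 0 = 1 →
      phiInv M (phiInv M a b) x = phiInv M a (phiInv 1 b x)) ∧
    (∀ x : ℕ → ℕ, (∀ i, x i ≤ 1) → x 0 = 1 →
      phiInvSeq M (phiInv M a b) x = phiInvSeq M a (phiInvSeq 1 b x)) := by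
  obtain ⟨u, c, rfl, hu, hc⟩ := ha.exists_eq_concat
  obtain ⟨v, c', rfl, hv, hc'⟩ := hb.exists_eq_concat
  obtain rfl : c' = 0 := Nat.lt_one_iff.1 hc'
  refine ⟨fun x hx _ => ?_, fun x hx _ => phiInvSeq_phiInv hu hc hv hx⟩
  simpa only [phiInv_eq_phiInvFrom] using phiInvFrom_phiInv hu hc hv hx zero_le_one

/-- Φ_{a∘b}⁻¹ = Φ_a⁻¹ ∘ Φ_b⁻¹, on finite and on infinite {0,1}-words starting
with the digit 1. -/
theorem statement3 (M : ℕ) (hM : 1 ≤ M) (a b : List ℕ)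
    (ha : IsFundamental M a) (hb : IsFundamental 1 b) :
    (∀ x : List ℕ, (∀ d ∈ x, d ≤ 1) → x.getD 0 0 = 1 →
      phiInv M (phiInv M a b) x = phiInv M a (phiInv 1 b x)) ∧
    (∀ x : ℕ → ℕ, (∀ i, x i ≤ 1) → x 0 = 1 →
      phiInvSeq M (phiInv M a b) x = phiInvSeq M a (phiInvSeq 1 b x)) :=
  statement3_general M a b ha hb
end

section
/- Let q > q_T be such that α(q) = a_1a_2… is irreducible and a_1 = M. Then there exists a strictly increasing sequence (m_j)_{j≥1} of positive integers such that for each j the word a_1…a_{m_j}⁻ is fundamental, m_{j+1} ≤ 2·m_j for every j, and m_1 = 2 if M = 1 while m_1 = 1 if M ≥ 2. -/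
open Filter Set

/-!
Call m good when a_m > 0 and no factor a_{i+1}…a_m with 1 ≤ i < m is the reflection of the
prefix of the same length. For a sequence in V this makes a_1…a_m⁻ fundamental, hence
(a_1…a_m⁻)^∞ ∈ V, and irreducibility gives a_1…a_m(overline(a_1…a_m)⁺)^∞ ≺ α(q). So there is
m' ∈ (m, 2m] with a_{m+1}…a_{m'-1} = overline(a_1…a_{m'-m-1}) and a_{m'} > overline(a_{m'-m}),
and such an m' is again good: a suffix of a_1…a_{m'} reflecting a prefix would, through
σⁿ(α(q)) ≼ α(q), force a_{m'} ≤ overline(a_{m'-m}). Good lengths thus chain with m < m' ≤ 2m,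
starting from m = 1 when M ≥ 2 and from m = 2 when M = 1, since a_2 = 0 would force
q < 44/25 < q_T.
-/

namespace IrreducibleExpansion

section Words

variable {M : ℕ} {x y : ℕ → ℕ}

theorem length_pref (x : ℕ → ℕ) (n : ℕ) : (pref x n).length = n := by
  simp [pref]

theorem mem_pref {d n : ℕ} : d ∈ pref x n ↔ ∃ t < n, x t = d := by
  simp [pref]

theorem getD_pref (x : ℕ → ℕ) (n t : ℕ) : (pref x n).getD t 0 = if t < n then x t else 0 := by
  split_ifs with h <;> simp [pref, List.getD_eq_getElem?_getD, h]

theorem pref_congr {n : ℕ} (h : ∀ t < n, x t = y t) : pref x n = pref y n :=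
  List.map_congr_left fun t ht => h t (List.mem_range.mp ht)

theorem pref_succ (x : ℕ → ℕ) (k : ℕ) : pref x (k + 1) = pref x k ++ [x k] := by
  simp [pref, List.range_succ]

theorem take_pref {k n : ℕ} (h : k ≤ n) : (pref x n).take k = pref x k := by
  rw [pref, ← List.map_take, List.take_range, Nat.min_eq_left h, pref]

theorem drop_pref (x : ℕ → ℕ) (i n : ℕ) : (pref x n).drop i = pref (shiftn x i) (n - i) := by
  refine List.ext_getElem (by simp [length_pref]) fun t h₁ h₂ => ?_
  simp [pref, shiftn]

theorem reflW_pref (x : ℕ → ℕ) (n : ℕ) : reflW M (pref x n) = pref (reflSeq M x) n := by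
  simp [reflW, pref, reflSeq]

theorem shiftn_zero (x : ℕ → ℕ) : shiftn x 0 = x := by
  funext t; simp [shiftn]

theorem pref_periodic (w : List ℕ) : pref (periodic w) w.length = w := by
  refine List.ext_getElem (length_pref _ _) fun t h₁ h₂ => ?_
  simp [pref, periodic, Nat.mod_eq_of_lt h₂, List.getElem?_eq_getElem h₂]

theorem periodic_periodic (w : List ℕ) : Function.Periodic (periodic w) w.length := by
  intro j; simp [periodic]

theorem wminus_pref_succ (x : ℕ → ℕ) (k : ℕ) :
    wminus (pref x (k + 1)) = pref (Function.update x k (x k - 1)) (k + 1) := by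
  rw [wminus, pref_succ, pref_succ, List.dropLast_concat, Function.update_self,
    pref_congr fun t ht => (Function.update_of_ne ht.ne (x k - 1) x).symm]
  simp

theorem wplus_pref_succ (x : ℕ → ℕ) (k : ℕ) :
    wplus (pref x (k + 1)) = pref (Function.update x k (x k + 1)) (k + 1) := by
  rw [wplus, pref_succ, pref_succ, List.dropLast_concat, Function.update_self,
    pref_congr fun t ht => (Function.update_of_ne ht.ne (x k + 1) x).symm]
  simp

theorem wordThenPer_pref_add {m u : ℕ} (hu : u < m) :
    wordThenPer (pref x m) (pref y m) (m + u) = y u := by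
  rw [wordThenPer, length_pref, length_pref, if_neg (by omega), Nat.add_sub_cancel_left,
    Nat.mod_eq_of_lt hu, getD_pref, if_pos hu]

theorem wordThenPer_pref_of_lt {m j : ℕ} (hj : j < m) :
    wordThenPer (pref x m) (pref y m) j = x j := by
  rw [wordThenPer, length_pref, if_pos hj, getD_pref, if_pos hj]

theorem wordLt_pref_iff {n : ℕ} :
    wordLt (pref x n) (pref y n) ↔ ∃ k < n, (∀ t < k, x t = y t) ∧ x k < y k := by
  simp only [wordLt, seqLt, wordSeq, getD_pref]
  constructor
  · rintro ⟨k, hagree, hk⟩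
    have hkn : k < n := by by_contra h; simp [h] at hk
    exact ⟨k, hkn, fun t ht => by simpa [ht.trans hkn] using hagree t ht, by simpa [hkn] using hk⟩
  · rintro ⟨k, hkn, hagree, hk⟩
    exact ⟨k, fun t ht => by simp [ht.trans hkn, hagree t ht], by simpa [hkn] using hk⟩

theorem wordLe_pref_iff {n : ℕ} :
    wordLe (pref x n) (pref y n) ↔ wordLt (pref x n) (pref y n) ∨ ∀ t < n, x t = y t := by
  refine or_congr Iff.rfl ⟨fun h t ht => ?_, fun h => congrArg wordSeq (pref_congr h)⟩
  simpa only [wordSeq, getD_pref, if_pos ht] using congrFun h t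

theorem wordLt_pref_one : wordLt (pref x 1) (pref y 1) ↔ x 0 < y 0 := by
  simp [wordLt_pref_iff]

theorem wordLe_pref_one : wordLe (pref x 1) (pref y 1) ↔ x 0 ≤ y 0 := by
  simp [wordLe_pref_iff, wordLt_pref_one, le_iff_lt_or_eq]

theorem seqLt_of_wordLt_pref {n : ℕ} (h : wordLt (pref x n) (pref y n)) : seqLt x y := by
  obtain ⟨k, -, hagree, hk⟩ := wordLt_pref_iff.mp h
  exact ⟨k, hagree, hk⟩

theorem wordLe_pref_of_seqLe (h : seqLe x y) (n : ℕ) : wordLe (pref x n) (pref y n) := by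
  rcases h with ⟨k, hagree, hk⟩ | rfl
  · by_cases hkn : k < n
    · exact Or.inl (wordLt_pref_iff.mpr ⟨k, hkn, hagree, hk⟩)
    · exact wordLe_pref_iff.mpr (Or.inr fun t ht => hagree t (by omega))
  · exact Or.inr rfl

theorem wordLt_wminus_pref_of_wordLe {k : ℕ} (h : wordLe (pref x (k + 1)) (pref y (k + 1)))
    (hx : 0 < x k) : wordLt (wminus (pref x (k + 1))) (pref y (k + 1)) := by
  rw [wminus_pref_succ, wordLt_pref_iff]
  rcases wordLe_pref_iff.mp h with hlt | heq
  · obtain ⟨j, hj, hagree, hxy⟩ := wordLt_pref_iff.mp hlt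
    refine ⟨j, hj, fun t ht => ?_, ?_⟩
    · rw [Function.update_of_ne (by omega), hagree t ht]
    · rw [Function.update_apply]
      split_ifs with hjk
      · subst hjk; omega
      · exact hxy
  · refine ⟨k, k.lt_succ_self, fun t ht => ?_, ?_⟩
    · rw [Function.update_of_ne ht.ne, heq t (by omega)]
    · rw [Function.update_self, ← heq k k.lt_succ_self]; omega

theorem wordLe_wminus_pref_of_wordLt {k : ℕ} (h : wordLt (pref x (k + 1)) (pref y (k + 1))) :
    wordLe (pref x (k + 1)) (wminus (pref y (k + 1))) := by
  rw [wminus_pref_succ, wordLe_pref_iff, wordLt_pref_iff]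
  obtain ⟨j, hj, hagree, hxy⟩ := wordLt_pref_iff.mp h
  have hagree' : ∀ t < j, x t = Function.update y k (y k - 1) t := fun t ht => by
    rw [Function.update_of_ne (by omega), hagree t ht]
  rcases Nat.lt_or_ge j k with hjk | hjk
  · exact Or.inl ⟨j, hj, hagree', by rwa [Function.update_of_ne hjk.ne]⟩
  · obtain rfl : j = k := by omega
    rcases Nat.lt_or_ge (x j) (y j - 1) with hlt | hge
    · exact Or.inl ⟨j, hj, hagree', by rwa [Function.update_self]⟩
    · refine Or.inr fun t ht => ?_
      rcases Nat.lt_or_ge t j with htj | htj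
      · exact hagree' t htj
      · obtain rfl : t = j := by omega
        rw [Function.update_self]; omega

theorem wordLe_pref_reflSeq_comm {n : ℕ} (hx : ∀ t < n, x t ≤ M) (hy : ∀ t < n, y t ≤ M)
    (h : wordLe (pref (reflSeq M x) n) (pref y n)) : wordLe (pref (reflSeq M y) n) (pref x n) := by
  simp only [wordLe_pref_iff, wordLt_pref_iff, reflSeq] at h ⊢
  rcases h with ⟨k, hk, hagree, hlt⟩ | heq
  · refine Or.inl ⟨k, hk, fun t ht => ?_, ?_⟩
    · have := hagree t ht; have := hx t (by omega); have := hy t (by omega); omega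
    · have := hx k hk; have := hy k hk; omega
  · exact Or.inr fun t ht => by have := heq t ht; have := hx t ht; have := hy t ht; omega

theorem isFundamental_pref_iff {m : ℕ} (hm : 2 ≤ m) :
    IsFundamental M (pref x m) ↔ (∀ t < m, x t ≤ M) ∧ ∀ i, 1 ≤ i → i < m →
      wordLe (pref (reflSeq M x) (m - i)) (pref (shiftn x i) (m - i)) ∧
      wordLt (pref (shiftn x i) (m - i)) (pref x (m - i)) := by
  have hm1 : ¬ m = 1 := by omega
  simp only [IsFundamental, length_pref, hm1, false_and, false_or, hm, true_and]
  refine and_congr ⟨fun h t ht => h _ (mem_pref.mpr ⟨t, ht, rfl⟩), ?_⟩ <|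
    forall₃_congr fun i _ hi => ?_
  · rintro h d hd
    obtain ⟨t, ht, rfl⟩ := mem_pref.mp hd
    exact h t ht
  · rw [take_pref (by omega), drop_pref, reflW_pref]

theorem apply_le_of_seqLe (h : seqLe x y) {n : ℕ} (hagree : ∀ t < n, x t = y t) : x n ≤ y n := by
  rcases h with ⟨k, hk, hlt⟩ | rfl
  · rcases lt_trichotomy k n with hkn | rfl | hnk
    · exact absurd (hagree k hkn) hlt.ne
    · exact hlt.le
    · exact (hk n hnk).le
  · exact le_rfl

theorem seqLt_of_eqOn_of_seqLt_shiftn {k : ℕ} (h : ∀ t < k, x t = y t)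
    (hs : seqLt (shiftn x k) (shiftn y k)) : seqLt x y := by
  obtain ⟨n, hagree, hlt⟩ := hs
  refine ⟨k + n, fun t ht => ?_, hlt⟩
  rcases Nat.lt_or_ge t k with htk | htk
  · exact h t htk
  · simpa [shiftn, Nat.add_sub_cancel' htk] using hagree (t - k) (by omega)

end Words

section Periodic

variable {M m : ℕ} {x : ℕ → ℕ}

theorem shiftn_eq_shiftn_mod (hx : Function.Periodic x m) (n : ℕ) :
    shiftn x n = shiftn x (n % m) := by
  funext t
  have h := hx.nat_mul (n / m) (n % m + t)
  simp only [Nat.cast_id] at h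
  simp only [shiftn, ← h]
  congr 1
  linarith [Nat.mod_add_div n m]

theorem eq_of_periodic_of_forall_lt {y : ℕ → ℕ} (hm : 0 < m) (hx : Function.Periodic x m)
    (hy : Function.Periodic y m) (h : ∀ t < m, x t = y t) : x = y := by
  funext t
  rw [← hx.map_mod_nat, ← hy.map_mod_nat, h _ (Nat.mod_lt t hm)]

theorem seqLe_reflSeq_shiftn_of_isFundamental (hm : 2 ≤ m) (hx : Function.Periodic x m)
    (hf : IsFundamental M (pref x m)) {i : ℕ} (hi : 1 ≤ i) (him : i < m) :
    seqLe (reflSeq M x) (shiftn x i) := by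
  obtain ⟨hd, hw⟩ := (isFundamental_pref_iff hm).mp hf
  rcases wordLe_pref_iff.mp (hw i hi him).1 with hlt | hagree
  · exact Or.inl (seqLt_of_wordLt_pref hlt)
  have hwrap : shiftn (shiftn x i) (m - i) = x := by
    funext t
    simp only [shiftn, show i + (m - i + t) = t + m by omega, hx t]
  -- the condition at m - i, read backwards through the reflection, covers the wrap-around
  have hback : wordLe (pref (shiftn (reflSeq M x) (m - i)) i) (pref x i) := by
    have h := (hw (m - i) (by omega) (by omega)).1
    rw [show m - (m - i) = i by omega] at h
    exact wordLe_pref_reflSeq_comm (fun t ht => hd t (by omega))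
      (fun t ht => hd (m - i + t) (by omega)) h
  rcases wordLe_pref_iff.mp hback with hlt | hagree'
  · refine Or.inl (seqLt_of_eqOn_of_seqLt_shiftn hagree ?_)
    rw [hwrap]
    exact seqLt_of_wordLt_pref hlt
  · have hrefl : Function.Periodic (reflSeq M x) m := fun t => by simp only [reflSeq, hx t]
    have hshift : Function.Periodic (shiftn x i) m := fun t => by
      simp only [shiftn, ← add_assoc, hx (i + t)]
    refine Or.inr (eq_of_periodic_of_forall_lt (by omega) hrefl hshift fun t ht => ?_)
    rcases Nat.lt_or_ge t (m - i) with hti | hti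
    · exact hagree t hti
    · have h := hagree' (t - (m - i)) (by omega)
      simp only [shiftn, reflSeq, Nat.add_sub_cancel' hti] at h ⊢
      rw [h, show i + t = t - (m - i) + m by omega, hx]

theorem mem_Vset_of_isFundamental_pref (hm : 2 ≤ m) (hx : Function.Periodic x m)
    (hf : IsFundamental M (pref x m)) : x ∈ Vset M := by
  obtain ⟨hd, hw⟩ := (isFundamental_pref_iff hm).mp hf
  refine ⟨fun j => hx.map_mod_nat j ▸ hd _ (Nat.mod_lt _ (by omega)), fun n => ?_⟩
  rw [shiftn_eq_shiftn_mod hx n]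
  have him : n % m < m := Nat.mod_lt n (by omega)
  rcases Nat.eq_zero_or_pos (n % m) with h0 | hpos
  · obtain ⟨hrefl, hlt⟩ := hw (m - 1) (by omega) (by omega)
    rw [show m - (m - 1) = 1 by omega, wordLe_pref_one] at hrefl
    rw [show m - (m - 1) = 1 by omega, wordLt_pref_one] at hlt
    rw [h0, shiftn_zero]
    exact ⟨Or.inl ⟨0, fun _ h => absurd h (Nat.not_lt_zero _), by
      simp only [reflSeq, shiftn] at hrefl hlt ⊢; omega⟩, Or.inr rfl⟩
  · exact ⟨seqLe_reflSeq_shiftn_of_isFundamental hm hx hf hpos him,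
      Or.inl (seqLt_of_wordLt_pref (hw _ hpos him).2)⟩

theorem periodic_mem_Vset_of_isFundamental {w : List ℕ} (hw : IsFundamental M w) :
    periodic w ∈ Vset M := by
  rcases hw.2 with ⟨hlen, -, hc, -⟩ | ⟨hlen, -⟩
  · obtain ⟨c, rfl⟩ := List.length_eq_one_iff.mp hlen
    have hconst : periodic [c] = fun _ => c := by funext j; simp [periodic, Nat.mod_one]
    simp only [List.head!_cons] at hc
    refine ⟨fun j => by simpa [hconst] using hw.1, fun n => ⟨?_, Or.inr (by rw [hconst]; rfl)⟩⟩
    rcases hc.lt_or_eq with hlt | heq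
    · exact Or.inl ⟨0, fun _ h => absurd h (Nat.not_lt_zero _), by simpa [hconst, reflSeq, shiftn]⟩
    · exact Or.inr (by funext j; simp [hconst, reflSeq, shiftn, heq])
  · refine mem_Vset_of_isFundamental_pref hlen (periodic_periodic w) ?_
    rwa [pref_periodic]

end Periodic


/-- With 0-based indices: the factor a_{i+1}…a_m is the reflection of the prefix a_1…a_{m-i}. -/
def ReflectsPrefix (M : ℕ) (a : ℕ → ℕ) (i m : ℕ) : Prop := ∀ t < m - i, a (i + t) = M - a t

def IsGoodLength (M : ℕ) (a : ℕ → ℕ) (m : ℕ) : Prop :=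
  0 < m ∧ 0 < a (m - 1) ∧ ∀ i, 0 < i → i < m → ¬ ReflectsPrefix M a i m

section GoodLength

variable {M m : ℕ} {a : ℕ → ℕ}

theorem isFundamental_wminus_pref (hV : a ∈ Vset M) (hm : 2 ≤ m) (hg : IsGoodLength M a m) :
    IsFundamental M (wminus (pref a m)) := by
  obtain ⟨k, rfl⟩ : ∃ k, m = k + 1 := ⟨m - 1, by omega⟩
  obtain ⟨-, hpos, hnr⟩ := hg
  rw [wminus_pref_succ]
  refine (isFundamental_pref_iff hm).mpr ⟨fun t _ => ?_, fun i hi hik => ?_⟩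
  · rw [Function.update_apply]
    split_ifs
    · exact (Nat.sub_le _ _).trans (hV.1 k)
    · exact hV.1 t
  obtain ⟨n, hn⟩ : ∃ n, k + 1 - i = n + 1 := ⟨k - i, by omega⟩
  have hrefl : pref (reflSeq M (Function.update a k (a k - 1))) (n + 1) =
      pref (reflSeq M a) (n + 1) :=
    pref_congr fun t ht => by simp only [reflSeq, Function.update_of_ne (show t ≠ k by omega)]
  have hpre : pref (Function.update a k (a k - 1)) (n + 1) = pref a (n + 1) :=
    pref_congr fun t ht => Function.update_of_ne (by omega) _ _
  have hsuf : pref (shiftn (Function.update a k (a k - 1)) i) (n + 1) =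
      wminus (pref (shiftn a i) (n + 1)) := by
    rw [wminus_pref_succ]
    refine pref_congr fun t ht => ?_
    simp only [shiftn, Function.update_apply, show i + t = k ↔ t = n by omega]
    split_ifs with htn
    · rw [show i + n = k by omega]
    · rfl
  rw [hn, hrefl, hpre, hsuf]
  constructor
  · refine wordLe_wminus_pref_of_wordLt ?_
    refine (wordLe_pref_iff.mp (wordLe_pref_of_seqLe (hV.2 i).1 _)).resolve_right fun heq => ?_
    exact hnr i hi hik fun t ht => (heq t (by omega)).symm
  · refine wordLt_wminus_pref_of_wordLe (wordLe_pref_of_seqLe (hV.2 i).2 _) ?_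
    rwa [shiftn, show i + n = k by omega]

theorem isFundamental_wminus_pref_one (hM : 2 ≤ M) (h0 : a 0 = M) :
    IsFundamental M (wminus (pref a 1)) := by
  rw [wminus_pref_succ, pref_succ, Function.update_self, h0]
  refine ⟨fun d hd => ?_, Or.inl ⟨rfl, hM, ?_, ?_⟩⟩ <;> simp [pref] at * <;> omega

theorem exists_reflected_run (hm : 0 < m)
    (hlt : seqLt (wordThenPer (pref a m) (wplus (reflW M (pref a m)))) a) :
    ∃ t < m, (∀ u < t, a (m + u) = M - a u) ∧ M - a t < a (m + t) := by
  obtain ⟨k, rfl⟩ : ∃ k, m = k + 1 := ⟨m - 1, by omega⟩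
  rw [reflW_pref, wplus_pref_succ] at hlt
  obtain ⟨n, hagree, hn⟩ := hlt
  have hnm : k + 1 ≤ n := by
    by_contra h
    rw [wordThenPer_pref_of_lt (by omega)] at hn
    exact lt_irrefl _ hn
  have hblock : ∀ u < k + 1, k + 1 + u < n →
      a (k + 1 + u) = Function.update (reflSeq M a) k (M - a k + 1) u := fun u hu hun => by
    rw [← hagree _ hun, wordThenPer_pref_add hu]; rfl
  have hrun : ∀ u < k, k + 1 + u < n → a (k + 1 + u) = M - a u := fun u hu hun => by
    rw [hblock u (by omega) hun, Function.update_of_ne hu.ne]; rfl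
  rcases Nat.lt_or_ge (n - (k + 1)) (k + 1) with hshort | hlong
  · obtain ⟨t, rfl⟩ : ∃ t, n = k + 1 + t := ⟨n - (k + 1), by omega⟩
    refine ⟨t, by omega, fun u hu => hrun u (by omega) (by omega), ?_⟩
    rw [wordThenPer_pref_add (by omega), Function.update_apply] at hn
    split_ifs at hn with htk
    · subst htk; simp only [reflSeq] at hn; omega
    · exact hn
  · refine ⟨k, k.lt_succ_self, fun u hu => hrun u hu (by omega), ?_⟩
    rw [hblock k k.lt_succ_self (by omega), Function.update_self]
    omega

theorem isGoodLength_of_reflected_run (hV : a ∈ Vset M) (hg : IsGoodLength M a m) {t : ℕ}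
    (ht : t < m) (hrun : ∀ u < t, a (m + u) = M - a u) (hlast : M - a t < a (m + t)) :
    IsGoodLength M a (m + t + 1) := by
  refine ⟨by omega, by rw [show m + t + 1 - 1 = m + t by omega]; omega, fun i hi him hrefl => ?_⟩
  rcases lt_trichotomy i m with him' | rfl | hmi
  · exact hg.2.2 i hi him' fun u hu => hrefl u (by omega)
  · have := hrefl t (by omega)
    omega
  obtain ⟨s, rfl⟩ : ∃ s, i = m + s := ⟨i - m, by omega⟩
  have hper : ∀ u < t - s, a (s + u) = a u := fun u hu => by
    have h₁ := hrefl u (by omega)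
    rw [add_assoc, hrun (s + u) (by omega)] at h₁
    have := hV.1 u; have := hV.1 (s + u)
    omega
  have hle : a t ≤ a (t - s) := by
    simpa [shiftn, show s + (t - s) = t by omega] using apply_le_of_seqLe (hV.2 s).2 hper
  have := hrefl (t - s) (by omega)
  rw [show m + s + (t - s) = m + t by omega] at this
  have := hV.1 t
  omega

theorem exists_isGoodLength_of_irreducibleSeq (hirr : IrreducibleSeq M a) (hg : IsGoodLength M a m)
    (hf : IsFundamental M (wminus (pref a m))) :
    ∃ m', m < m' ∧ m' ≤ 2 * m ∧ IsGoodLength M a m' := by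
  obtain ⟨t, ht, hrun, hlast⟩ := exists_reflected_run hg.1
    (hirr.2 m hg.1 hg.2.1 (periodic_mem_Vset_of_isFundamental hf))
  exact ⟨m + t + 1, by omega, by omega, isGoodLength_of_reflected_run hirr.1 hg ht hrun hlast⟩

end GoodLength

theorem exists_seq_of_forall_exists {α : Type*} {P : α → Prop} {R : α → α → Prop} {x₀ : α}
    (h₀ : P x₀) (h : ∀ x, P x → ∃ y, P y ∧ R x y) :
    ∃ f : ℕ → α, f 0 = x₀ ∧ ∀ n, P (f n) ∧ R (f n) (f (n + 1)) := by
  choose! g hgP hgR using h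
  have hP : ∀ n, P (g^[n] x₀) := fun n => by
    induction n with
    | zero => exact h₀
    | succ n ih => rw [Function.iterate_succ_apply']; exact hgP _ ih
  exact ⟨fun n => g^[n] x₀, rfl, fun n =>
    ⟨hP n, by simp only [Function.iterate_succ_apply']; exact hgR _ (hP n)⟩⟩

theorem summable_digit_series {M : ℕ} {q : ℝ} (hq : 1 < q) {b : ℕ → ℕ} (hb : ∀ i, b i ≤ M) :
    Summable fun i => (b i : ℝ) / q ^ (i + 1) := by
  have hr : 0 ≤ q⁻¹ := inv_nonneg.mpr (by linarith)
  refine Summable.of_nonneg_of_le (fun i => by positivity) (fun i => ?_)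
    ((summable_geometric_of_lt_one hr (inv_lt_one_of_one_lt₀ hq)).mul_left (M * q⁻¹))
  rw [div_eq_mul_inv, ← inv_pow, pow_succ', ← mul_assoc]
  gcongr
  exact_mod_cast hb i

theorem sum_range_le_one_of_isQuasiGreedy {M : ℕ} {q : ℝ} (hq : 1 < q) {b : ℕ → ℕ}
    (hb : isQuasiGreedy M q b) (n : ℕ) : ∑ i ∈ Finset.range n, (b i : ℝ) / q ^ (i + 1) ≤ 1 :=
  hb.2.2.1 ▸ (summable_digit_series hq hb.1).sum_le_tsum _ fun i _ => by positivity

theorem alphaQn_one_one : alphaQn 1 1 = wordThenPer [1, 1] [0, 1] := by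
  simp [alphaQn, pref, lamSeq, lam, tau, List.range_succ, wplus, reflW]

/- The constant 44/25 separates q_T ≈ 1.8019, the root of x³ = x² + 2x - 1, from the root
≈ 1.7549 of x³ = 2x² - x + 1, which bounds the bases whose quasi-greedy expansion begins with 10. -/
theorem lt_of_isQuasiGreedy_alphaQn_one {q : ℝ} (hq : 1 < q) (h : isQuasiGreedy 1 q (alphaQn 1 1)) :
    44 / 25 < q := by
  have hsum : q⁻¹ + q⁻¹ ^ 2 + q⁻¹ ^ 4 + q⁻¹ ^ 6 ≤ 1 := by
    simpa [Finset.sum_range_succ, alphaQn_one_one, wordThenPer, inv_pow] using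
      sum_range_le_one_of_isQuasiGreedy hq h 6
  by_contra! hle
  have hr : 25 / 44 ≤ q⁻¹ := by rw [← inv_div]; exact inv_anti₀ (by linarith) hle
  have : (25 / 44 : ℝ) + (25 / 44) ^ 2 + (25 / 44) ^ 4 + (25 / 44) ^ 6 ≤ 1 :=
    le_trans (by gcongr) hsum
  norm_num at this

theorem lt_of_tsum_eq_one_of_apply_one_eq_zero {q : ℝ} (hq : 1 < q) {b : ℕ → ℕ}
    (hb : ∀ i, b i ≤ 1) (hb1 : b 1 = 0) (hsum : ∑' i, (b i : ℝ) / q ^ (i + 1) = 1) :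
    q < 44 / 25 := by
  set r := q⁻¹ with hr
  have hr0 : 0 ≤ r := inv_nonneg.mpr (by linarith)
  have hr1 : r < 1 := inv_lt_one_of_one_lt₀ hq
  have hgeo : HasSum (fun i : ℕ => r ^ (i + 1)) (r * (1 - r)⁻¹) := by
    simpa only [pow_succ'] using (hasSum_geometric_of_lt_one hr0 hr1).mul_left r
  have hdigits := (summable_digit_series hq hb).hasSum
  rw [hsum] at hdigits
  -- since b 1 = 0, adding r ^ 2 at index 1 keeps the series below the geometric one
  have hle := hasSum_le (fun i => ?_) (hdigits.add (hasSum_ite_eq 1 (r ^ 2))) hgeo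
  · have hpoly : (1 + r ^ 2) * (1 - r) ≤ r :=
      (le_div_iff₀ (by linarith)).mp (by rwa [div_eq_mul_inv])
    have hr' : 25 / 44 < r := by
      by_contra! h
      nlinarith [mul_nonneg (sub_nonneg.mpr h)
        (by nlinarith : (0 : ℝ) ≤ 2 - r - 25 / 44 + r ^ 2 + r * (25 / 44) + (25 / 44) ^ 2)]
    rw [hr, lt_inv_comm₀ (by norm_num) (by linarith)] at hr'
    linarith
  · rcases eq_or_ne i 1 with rfl | hi
    · simp [hb1]
    · simp only [hi, if_false, add_zero, div_eq_mul_inv, ← inv_pow, hr]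
      exact mul_le_of_le_one_left (by positivity) (by exact_mod_cast hb i)

theorem isQuasiGreedy_alphaF {M : ℕ} {q : ℝ} (h : alphaF M q 0 ≠ 0) :
    isQuasiGreedy M q (alphaF M q) := by
  unfold alphaF at h ⊢
  split_ifs at h ⊢ with hE
  · exact hE.choose_spec
  · exact absurd rfl h

theorem alphaF_one_apply_one {qT q : ℝ} (hqT : 1 < qT) (halphaT : alphaF 1 qT = alphaQn 1 1)
    (hq : qT < q) (h0 : alphaF 1 q 0 = 1) : alphaF 1 q 1 = 1 := by
  have hqg := isQuasiGreedy_alphaF (M := 1) (q := q) (by omega)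
  have hqgT : isQuasiGreedy 1 qT (alphaQn 1 1) :=
    halphaT ▸ isQuasiGreedy_alphaF (by rw [halphaT, alphaQn_one_one]; decide)
  by_contra h
  have h1 : alphaF 1 q 1 = 0 := by have := hqg.1 1; omega
  linarith [lt_of_isQuasiGreedy_alphaQn_one hqT hqgT,
    lt_of_tsum_eq_one_of_apply_one_eq_zero (by linarith) hqg.1 h1 hqg.2.2.1]

end IrreducibleExpansion

open IrreducibleExpansion

theorem statement14_general (M : ℕ) (hM : 1 ≤ M) (qT q : ℝ)
    (hqT : qT ∈ Set.Ioc (1:ℝ) ((M:ℝ)+1)) (halphaT : alphaF M qT = alphaQn M 1)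
    (hq : qT < q)
    (hirr : IrreducibleSeq M (alphaF M q)) (h1 : alphaF M q 0 = M) :
    ∃ m : ℕ → ℕ, StrictMono m ∧ (∀ j, 0 < m j) ∧
      (∀ j, IsFundamental M (wminus (pref (alphaF M q) (m j)))) ∧
      (∀ j, m (j + 1) ≤ 2 * m j) ∧
      m 0 = (if M = 1 then 2 else 1) := by
  set a := alphaF M q
  let P m := IsGoodLength M a m ∧ IsFundamental M (wminus (pref a m))
  have hstep : ∀ m, P m → ∃ m', P m' ∧ m < m' ∧ m' ≤ 2 * m := fun m hm => by
    obtain ⟨m', hlt, hle, hg⟩ := exists_isGoodLength_of_irreducibleSeq hirr hm.1 hm.2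
    exact ⟨m', ⟨hg, isFundamental_wminus_pref hirr.1 (by have := hm.1.1; omega) hg⟩, hlt, hle⟩
  have hbase : P (if M = 1 then 2 else 1) := by
    split_ifs with hM1
    · subst hM1
      have ha1 : a 1 = 1 := alphaF_one_apply_one hqT.1 halphaT hq h1
      have hg : IsGoodLength 1 a 2 := ⟨two_pos, by simp [ha1], fun i hi hi2 hrefl => by
        obtain rfl : i = 1 := by omega
        have := hrefl 0 (by omega)
        simp [ha1, h1] at this⟩
      exact ⟨hg, isFundamental_wminus_pref hirr.1 le_rfl hg⟩
    · exact ⟨⟨one_pos, by simp [h1]; omega, fun i hi hi1 => absurd hi1 (by omega)⟩,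
        isFundamental_wminus_pref_one (by omega) h1⟩
  obtain ⟨m, hm0, hm⟩ := exists_seq_of_forall_exists hbase hstep
  exact ⟨m, strictMono_nat_of_lt_succ fun j => (hm j).2.1, fun j => (hm j).1.1.1,
    fun j => (hm j).1.2, fun j => (hm j).2.2, hm0⟩

/-- If q > q_T, α(q) = a₁a₂… is irreducible and a₁ = M, then there is a
strictly increasing sequence (m_j) of positive integers with a₁…a_{m_j}⁻ fundamental,
m_{j+1} ≤ 2m_j, and m₁ = 2 if M = 1, m₁ = 1 if M ≥ 2. -/
theorem statement14 (M : ℕ) (hM : 1 ≤ M) (qT q : ℝ)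
    (hqT : qT ∈ Set.Ioc (1:ℝ) ((M:ℝ)+1)) (halphaT : alphaF M qT = alphaQn M 1)
    (hq : qT < q) (hqM : q ≤ (M:ℝ)+1)
    (hirr : IrreducibleSeq M (alphaF M q)) (h1 : alphaF M q 0 = M) :
    ∃ m : ℕ → ℕ, StrictMono m ∧ (∀ j, 0 < m j) ∧
      (∀ j, IsFundamental M (wminus (pref (alphaF M q) (m j)))) ∧
      (∀ j, m (j + 1) ≤ 2 * m j) ∧
      m 0 = (if M = 1 then 2 else 1) :=
  statement14_general M hM qT q hqT halphaT hq hirr h1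
end

section
/- Let u = a_1…a_m be a word over {0,…,M} such that u⁻ is fundamental. If for some index i with 1 ≤ i < m one has a_{m−i+1}…a_m⁻ = overline(a_1…a_i), then i ≤ m/2. -/
open Filter Set

lemma wminus_length (w : List ℕ) (hw : w ≠ []) : (wminus w).length = w.length := by
  have := List.length_pos_iff.mpr hw
  simp [wminus]
  omega

lemma wminus_getD_lt (w : List ℕ) (k : ℕ) (h : k + 1 < w.length) :
    (wminus w).getD k 0 = w.getD k 0 := by
  rw [wminus, List.getD_append _ _ _ _ (by simp; omega)]
  rw [List.getD_eq_getElem?_getD, List.getD_eq_getElem?_getD, List.getElem?_dropLast,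
    if_pos (by omega)]

lemma wminus_getD_last (w : List ℕ) (hw : w ≠ []) :
    (wminus w).getD (w.length - 1) 0 = w.getD (w.length - 1) 0 - 1 := by
  obtain ⟨x, hx⟩ := List.getLast?_isSome.mpr hw |> Option.isSome_iff_exists.mp
  have h1 : w.getLast! = x := List.getLast!_of_getLast? hx
  have h2 : w[w.length - 1]? = some x := by rw [← List.getLast?_eq_getElem?]; exact hx
  have h3 : (wminus w).getD (w.length - 1) 0 = x - 1 := by
    rw [wminus, List.getD_eq_getElem?_getD, h1]
    have : w.length - 1 = w.dropLast.length := by simp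
    rw [this, List.getElem?_concat_length]
    rfl
  rw [h3, List.getD_eq_getElem?_getD, h2]
  rfl


/-- If u = a₁…a_m is such that u⁻ is fundamental and
a_{m-i+1}…a_m⁻ = overline(a₁…a_i) for some 1 ≤ i < m, then i ≤ m/2. -/
theorem statement15 (M : ℕ) (hM : 1 ≤ M) (u : List ℕ) (hu : ∀ d ∈ u, d ≤ M)
    (hfund : IsFundamental M (wminus u)) (i : ℕ) (hi1 : 1 ≤ i) (hi2 : i < u.length)
    (heq : wminus (u.drop (u.length - i)) = reflW M (u.take i)) :
    2 * i ≤ u.length := by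
  by_contra hcon
  set m := u.length with hm
  set r := m - i with hr
  have hm2 : 2 ≤ m := by omega
  have hune : u ≠ [] := by
    intro h
    have : m = 0 := by rw [hm, h]; rfl
    omega
  set A : ℕ → ℕ := fun k => (wminus u).getD k 0 with hA
  have hlen : (wminus u).length = m := wminus_length u hune
  -- u digit bound
  have hub : ∀ k < m, u.getD k 0 ≤ M := by
    intro k hk
    have : u.getD k 0 ∈ u := by
      rw [List.getD_eq_getElem?_getD, List.getElem?_eq_getElem hk]
      exact List.getElem_mem _
    exact hu _ this
  -- A agrees with u on prefix
  have hpre : ∀ k, k + 1 < m → A k = u.getD k 0 := fun k hk => wminus_getD_lt u k hk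
  -- drop facts
  have hdlen : (u.drop r).length = i := by rw [List.length_drop]; omega
  have hdne : u.drop r ≠ [] := by intro h; rw [h] at hdlen; simp at hdlen; omega
  have hdgetD : ∀ k < i, (u.drop r).getD k 0 = u.getD (r + k) 0 := by
    intro k hk
    rw [List.getD_eq_getElem?_getD, List.getD_eq_getElem?_getD, List.getElem?_drop]
  -- reflW (u.take i) getD
  have hrefl : ∀ k < i, (reflW M (u.take i)).getD k 0 = M - u.getD k 0 := by
    intro k hk
    rw [reflW, List.getD_eq_getElem?_getD, List.getElem?_map, List.getElem?_take, if_pos hk,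
      List.getElem?_eq_getElem (by omega : k < u.length)]
    simp [List.getD_eq_getElem?_getD, List.getElem?_eq_getElem (by omega : k < u.length)]
  -- main digit identity from heq
  have hkey : ∀ k < i, A (r + k) = M - A k := by
    intro k hk
    have hAk : A k = u.getD k 0 := hpre k (by omega)
    have heqk : (wminus (u.drop r)).getD k 0 = M - u.getD k 0 := by
      rw [heq]; exact hrefl k hk
    rw [hAk]
    rcases Nat.lt_or_ge (k + 1) i with hk1 | hk1
    · rw [← heqk, hA]
      simp only
      rw [wminus_getD_lt _ k (by omega), wminus_getD_lt u (r + k) (by omega), hdgetD k hk]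
    · have hki : k = i - 1 := by omega
      have h1 : (wminus (u.drop r)).getD k 0 = (u.drop r).getD k 0 - 1 := by
        have := wminus_getD_last (u.drop r) hdne
        rwa [hdlen, ← hki] at this
      have h2 : A (r + k) = u.getD (r + k) 0 - 1 := by
        have := wminus_getD_last u hune
        have hrk : r + k = m - 1 := by omega
        rw [hA]; simp only; rw [hrk]; exact this
      rw [h2, ← hdgetD k hk, ← h1, heqk]
  have hAle : ∀ k < i, A k ≤ M := by
    intro k hk; rw [hpre k (by omega)]; exact hub k (by omega)
  have hkey2 : ∀ k, k < i - r → A (2 * r + k) = A k := by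
    intro k hk
    have e1 : A (2 * r + k) = M - A (r + k) := by
      have := hkey (r + k) (by omega)
      rw [← this]; ring_nf
    rw [e1, hkey k (by omega)]
    have := hAle k (by omega)
    omega
  -- fundamentality
  obtain ⟨-, hcase⟩ := hfund
  rcases hcase with ⟨h1, -⟩ | ⟨-, h2⟩
  · omega
  obtain ⟨-, hlt⟩ := h2 (2 * r) (by omega) (by omega)
  obtain ⟨n, -, hn⟩ := hlt
  rw [hlen] at hn
  have hnlt : n < m - 2 * r := by
    by_contra hge
    have : wordSeq ((wminus u).take (m - 2 * r)) n = 0 := by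
      rw [wordSeq, List.getD_eq_getElem?_getD, List.getElem?_take, if_neg (by omega)]
      rfl
    omega
  have htake : wordSeq ((wminus u).take (m - 2 * r)) n = A n := by
    rw [wordSeq, List.getD_eq_getElem?_getD, List.getElem?_take, if_pos hnlt]
    simp [hA, List.getD_eq_getElem?_getD]
  have hdrop : wordSeq ((wminus u).drop (2 * r)) n = A (2 * r + n) := by
    rw [wordSeq, List.getD_eq_getElem?_getD, List.getElem?_drop]
    simp [hA, List.getD_eq_getElem?_getD]
  rw [htake, hdrop, hkey2 n (by omega)] at hn
  omega
end
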